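/- arXiv:2203.15493 — 14 statements merged into one kernel-verified Lean document; each statement's English description precedes it below -/
import Mathlib

section
/- In k[x,y,z], the polynomial D_3 = y^4 - x^8 z + 4 x^5 y z^2 - 6 x^2 y^2 z^3 - x^4 z^6 + 4 x y z^7 - z^{11} satisfies the identity D_3 = F^2 - z^3 G^2 - x^2 z H^2 - 2 x z^2 G H, where F = y^2 - x^2 z^3, G = z^4 - xy, H = x^3 - yz. In particular, D_3 lies in the square of the ideal (F, G, H). -/
open MvPolynomial

theorem stmt_3 {k : Type*} [Field k]
    (x y z F G H D3 : MvPolynomial (Fin 3) k)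
    (hx : x = X 0) (hy : y = X 1) (hz : z = X 2)
    (hF : F = y ^ 2 - x ^ 2 * z ^ 3)
    (hG : G = z ^ 4 - x * y)
    (hH : H = x ^ 3 - y * z)
    (hD3 : D3 = y ^ 4 - x ^ 8 * z + 4 * x ^ 5 * y * z ^ 2 - 6 * x ^ 2 * y ^ 2 * z ^ 3
      - x ^ 4 * z ^ 6 + 4 * x * y * z ^ 7 - z ^ 11) :
    D3 = F ^ 2 - z ^ 3 * G ^ 2 - x ^ 2 * z * H ^ 2 - 2 * x * z ^ 2 * G * H ∧
    D3 ∈ (Ideal.span {F, G, H}) ^ 2 := by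
  have hid : D3 = F ^ 2 - z ^ 3 * G ^ 2 - x ^ 2 * z * H ^ 2 - 2 * x * z ^ 2 * G * H := by
    subst hF hG hH hD3; ring
  refine ⟨hid, ?_⟩
  have hFm : F ∈ Ideal.span {F, G, H} := Ideal.subset_span (by simp)
  have hGm : G ∈ Ideal.span {F, G, H} := Ideal.subset_span (by simp)
  have hHm : H ∈ Ideal.span {F, G, H} := Ideal.subset_span (by simp)
  rw [hid, sq (Ideal.span {F, G, H})]
  have h1 : F ^ 2 = F * F := sq F
  rw [h1]
  refine Ideal.sub_mem _ (Ideal.sub_mem _ (Ideal.sub_mem _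
    (Ideal.mul_mem_mul hFm hFm) ?_) ?_) ?_
  · rw [mul_comm]; exact Ideal.mul_mem_left _ _ (by rw [sq]; exact Ideal.mul_mem_mul hGm hGm)
  · rw [mul_comm]; exact Ideal.mul_mem_left _ _ (by rw [sq]; exact Ideal.mul_mem_mul hHm hHm)
  · have : 2 * x * z ^ 2 * G * H = (2 * x * z ^ 2) * (G * H) := by ring
    rw [this]; exact Ideal.mul_mem_left _ _ (Ideal.mul_mem_mul hGm hHm)
end

section
/- Let P = (F, G, H) ⊆ k[x,y,z] with F = y^2 - x^2 z^3, G = z^4 - xy, H = x^3 - yz, and let m = (x,y,z). Then the polynomial D_3 = y^4 - x^8 z + 4 x^5 y z^2 - 6 x^2 y^2 z^3 - x^4 z^6 + 4 x y z^7 - z^{11} does not lie in m·P^2. -/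
open MvPolynomial

set_option synthInstance.maxHeartbeats 1000000 in
set_option maxHeartbeats 1000000 in
theorem stmt_4 {k : Type*} [Field k]
    (x y z F G H D3 : MvPolynomial (Fin 3) k)
    (hx : x = X 0) (hy : y = X 1) (hz : z = X 2)
    (hF : F = y ^ 2 - x ^ 2 * z ^ 3)
    (hG : G = z ^ 4 - x * y)
    (hH : H = x ^ 3 - y * z)
    (hD3 : D3 = y ^ 4 - x ^ 8 * z + 4 * x ^ 5 * y * z ^ 2 - 6 * x ^ 2 * y ^ 2 * z ^ 3
      - x ^ 4 * z ^ 6 + 4 * x * y * z ^ 7 - z ^ 11) :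
    D3 ∉ Ideal.span {x, y, z} * (Ideal.span {F, G, H}) ^ 2 := by
  classical
  intro hmem
  set A := Polynomial k ⧸ Ideal.span ({Polynomial.X ^ 21} : Set (Polynomial k)) with hA
  let u : A := Ideal.Quotient.mk _ Polynomial.X
  have hu21 : u ^ 21 = 0 := by
    show (Ideal.Quotient.mk _ Polynomial.X : A) ^ 21 = 0
    rw [← map_pow, Ideal.Quotient.eq_zero_iff_mem]
    exact Ideal.subset_span rfl
  let φ : MvPolynomial (Fin 3) k →ₐ[k] A := aeval ![0, u ^ 5, u ^ 4]
  have hφx : φ x = 0 := by rw [hx]; simp [φ]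
  have hφy : φ y = u ^ 5 := by rw [hy]; simp [φ]
  have hφz : φ z = u ^ 4 := by rw [hz]; simp [φ]
  have hφF : φ F = u ^ 10 := by
    rw [hF]; simp only [map_sub, map_mul, map_pow, hφx, hφy, hφz]; ring
  have hφG : φ G = u ^ 16 := by
    rw [hG]; simp only [map_sub, map_mul, map_pow, hφx, hφy, hφz]; ring
  have hφH : φ H = -u ^ 9 := by
    rw [hH]; simp only [map_sub, map_mul, map_pow, hφx, hφy, hφz]; ring
  have hmap : φ D3 ∈ Ideal.map φ (Ideal.span {x, y, z} * (Ideal.span {F, G, H}) ^ 2) :=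
    Ideal.mem_map_of_mem _ hmem
  rw [Ideal.map_mul, Ideal.map_pow, Ideal.map_span, Ideal.map_span] at hmap
  have h1 : Ideal.span (⇑φ '' {x, y, z}) ≤ Ideal.span {u ^ 4} := by
    rw [Ideal.span_le]
    rintro a ⟨b, hb, rfl⟩
    simp only [SetLike.mem_coe]
    rcases hb with rfl | rfl | rfl
    · rw [hφx]; exact Ideal.zero_mem _
    · rw [hφy, Ideal.mem_span_singleton]; exact ⟨u, by ring⟩
    · rw [hφz]; exact Ideal.mem_span_singleton_self _
  have h2 : Ideal.span (⇑φ '' {F, G, H}) ≤ Ideal.span {u ^ 9} := by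
    rw [Ideal.span_le]
    rintro a ⟨b, hb, rfl⟩
    simp only [SetLike.mem_coe]
    rcases hb with rfl | rfl | rfl
    · rw [hφF, Ideal.mem_span_singleton]; exact ⟨u, by ring⟩
    · rw [hφG, Ideal.mem_span_singleton]; exact ⟨u ^ 7, by ring⟩
    · rw [hφH, Ideal.mem_span_singleton]; exact ⟨-1, by ring⟩
  have hsub : Ideal.span (⇑φ '' {x, y, z}) * (Ideal.span (⇑φ '' {F, G, H})) ^ 2
      ≤ Ideal.span {u ^ 4} * (Ideal.span {u ^ 9}) ^ 2 :=
    Ideal.mul_mono h1 (Ideal.pow_right_mono h2 2)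
  have hzero : Ideal.span ({u ^ 4} : Set A) * (Ideal.span {u ^ 9}) ^ 2 = ⊥ := by
    rw [Ideal.span_singleton_pow, Ideal.span_singleton_mul_span_singleton]
    have : u ^ 4 * (u ^ 9) ^ 2 = 0 := by
      have : u ^ 4 * (u ^ 9) ^ 2 = u ^ 21 * u := by ring
      rw [this, hu21, zero_mul]
    rw [this, Ideal.span_singleton_eq_bot.mpr rfl]
  have hD3zero : φ D3 = 0 := by
    have := hsub hmap
    rw [hzero] at this
    simpa using this
  have hφD3 : φ D3 = u ^ 20 := by
    rw [hD3]
    simp only [map_sub, map_add, map_mul, map_pow, hφx, hφy, hφz, map_ofNat]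
    have h44 : (u ^ 5) ^ 4 - 0 ^ 8 * u ^ 4 + 4 * 0 ^ 5 * u ^ 5 * (u ^ 4) ^ 2
        - 6 * 0 ^ 2 * (u ^ 5) ^ 2 * (u ^ 4) ^ 3 - 0 ^ 4 * (u ^ 4) ^ 6
        + 4 * 0 * u ^ 5 * (u ^ 4) ^ 7 - (u ^ 4) ^ 11
        = u ^ 20 - u ^ 21 * u ^ 21 * u ^ 2 := by ring
    rw [h44, hu21]
    ring
  rw [hφD3] at hD3zero
  -- u ^ 20 = 0 is a contradiction
  have : (Polynomial.X : Polynomial k) ^ 20 ∈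
      Ideal.span ({Polynomial.X ^ 21} : Set (Polynomial k)) := by
    rw [← Ideal.Quotient.eq_zero_iff_mem, map_pow]
    exact hD3zero
  rw [Ideal.mem_span_singleton] at this
  have h20 := Polynomial.X_pow_dvd_iff.mp this 20 (by norm_num)
  simp [Polynomial.coeff_X_pow] at h20
end

section
/- For a matrix M of type 1 (a1 ≤ a2, b1 ≥ b2, c1 ≥ c2), the element D_2 := x^{α2} z^{-c2}(HF - x^{a2-a1} y^{b1-b2} G^2), with α2 = max{0, a1 - a2} = 0, satisfies D_2 = -x^{α2}(y^{b1} F + x^{a2-a1} y^{b1-b2} z^{c1} G + x^{a2} z^{c1-c2} H); in particular D_2 ∈ m·P where P = (F,G,H) and m = (x,y,z). -/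
open MvPolynomial

theorem stmt_5 {k : Type*} [Field k]
    (a1 a2 b1 b2 c1 c2 : ℕ)
    (ha1 : 0 < a1) (hb2 : 0 < b2) (hc2 : 0 < c2)
    (ha : a1 ≤ a2) (hb : b2 ≤ b1) (hc : c2 ≤ c1)
    (x y z F G H D2 : MvPolynomial (Fin 3) k)
    (hx : x = X 0) (hy : y = X 1) (hz : z = X 2)
    (hF : F = y ^ (b1 + b2) - x ^ a2 * z ^ c1)
    (hG : G = z ^ (c1 + c2) - y ^ b2 * x ^ a1)
    (hH : H = x ^ (a1 + a2) - z ^ c2 * y ^ b1)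
    (hD2 : z ^ c2 * D2 = H * F - x ^ (a2 - a1) * y ^ (b1 - b2) * G ^ 2) :
    D2 = -(y ^ b1 * F + x ^ (a2 - a1) * y ^ (b1 - b2) * z ^ c1 * G
        + x ^ a2 * z ^ (c1 - c2) * H) ∧
    D2 ∈ Ideal.span {x, y, z} * Ideal.span {F, G, H} := by
  obtain ⟨d, rfl⟩ := Nat.exists_eq_add_of_le ha
  obtain ⟨e, rfl⟩ := Nat.exists_eq_add_of_le hb
  obtain ⟨f, rfl⟩ := Nat.exists_eq_add_of_le hc
  simp only [Nat.add_sub_cancel_left] at hD2 ⊢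
  have hzne : z ^ c2 ≠ (0 : MvPolynomial (Fin 3) k) := by
    rw [hz]; exact pow_ne_zero _ (X_ne_zero 2)
  have heq : D2 = -(y ^ (b2 + e) * F + x ^ d * y ^ e * z ^ (c2 + f) * G
      + x ^ (a1 + d) * z ^ f * H) := by
    apply mul_left_cancel₀ hzne
    rw [hD2, hF, hG, hH]
    ring
  refine ⟨heq, ?_⟩
  rw [heq]
  have hxm : x ∈ Ideal.span {x, y, z} := Ideal.subset_span (by simp)
  have hym : y ∈ Ideal.span {x, y, z} := Ideal.subset_span (by simp)
  have hzm : z ∈ Ideal.span {x, y, z} := Ideal.subset_span (by simp)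
  have hFm : F ∈ Ideal.span {F, G, H} := Ideal.subset_span (by simp)
  have hGm : G ∈ Ideal.span {F, G, H} := Ideal.subset_span (by simp)
  have hHm : H ∈ Ideal.span {F, G, H} := Ideal.subset_span (by simp)
  apply neg_mem
  have h1 : y ^ (b2 + e) * F = y ^ (b2 + e - 1) * (y * F) := by
    rw [← mul_assoc, ← pow_succ, Nat.sub_add_cancel (by omega)]
  have h2 : x ^ d * y ^ e * z ^ (c2 + f) * G
      = x ^ d * y ^ e * z ^ (c2 + f - 1) * (z * G) := by
    rw [show x ^ d * y ^ e * z ^ (c2 + f - 1) * (z * G)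
        = x ^ d * y ^ e * (z ^ (c2 + f - 1) * z) * G by ring,
      ← pow_succ, Nat.sub_add_cancel (by omega)]
  have h3 : x ^ (a1 + d) * z ^ f * H = x ^ (a1 + d - 1) * z ^ f * (x * H) := by
    rw [show x ^ (a1 + d - 1) * z ^ f * (x * H)
        = x ^ (a1 + d - 1) * x * z ^ f * H by ring,
      ← pow_succ, Nat.sub_add_cancel (by omega)]
  rw [h1, h2, h3]
  exact add_mem (add_mem (Ideal.mul_mem_left _ _ (Ideal.mul_mem_mul hym hFm))
    (Ideal.mul_mem_left _ _ (Ideal.mul_mem_mul hzm hGm)))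
    (Ideal.mul_mem_left _ _ (Ideal.mul_mem_mul hxm hHm))
end

section
/- For a matrix M of type 1, with α = max{0, 2a1 - a2}, γ = max{0, 2c2 - c1}, the element D_3 = x^α z^{γ - c2}(H D_2 - x^{a2 - 2a1} y^{2b1 - 2b2} G^3) satisfies D_3 = x^α y^{b1-b2} z^γ F^2 - x^{a2-2a1+α} y^{2b1-2b2} z^{c1+γ} G^2 - x^{a2+α} z^{c1-2c2+γ} H^2 - 2 x^{a2-a1+α} y^{b1-b2} z^{c1-c2+γ} G H; in particular D_3 ∈ P^2 where P = (F,G,H). -/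
open MvPolynomial

theorem stmt_7 {k : Type*} [Field k]
    (a1 a2 b1 b2 c1 c2 : ℕ)
    (ha1 : 0 < a1) (hb2 : 0 < b2) (hc2 : 0 < c2)
    (ha : a1 ≤ a2) (hb : b2 ≤ b1) (hc : c2 ≤ c1)
    (α γ : ℕ) (hα : α = 2 * a1 - a2) (hγ : γ = 2 * c2 - c1)
    (x y z F G H D2 D3 : MvPolynomial (Fin 3) k)
    (hx : x = X 0) (hy : y = X 1) (hz : z = X 2)
    (hF : F = y ^ (b1 + b2) - x ^ a2 * z ^ c1)
    (hG : G = z ^ (c1 + c2) - y ^ b2 * x ^ a1)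
    (hH : H = x ^ (a1 + a2) - z ^ c2 * y ^ b1)
    (hD2 : z ^ c2 * D2 = H * F - x ^ (a2 - a1) * y ^ (b1 - b2) * G ^ 2)
    (hD3 : z ^ (c2 - γ) * D3
      = x ^ α * (H * D2) - x ^ ((α + a2) - 2 * a1) * y ^ (2 * b1 - 2 * b2) * G ^ 3) :
    D3 = x ^ α * y ^ (b1 - b2) * z ^ γ * F ^ 2
      - x ^ ((α + a2) - 2 * a1) * y ^ (2 * b1 - 2 * b2) * z ^ (c1 + γ) * G ^ 2
      - x ^ (a2 + α) * z ^ ((γ + c1) - 2 * c2) * H ^ 2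
      - 2 * x ^ (a2 - a1 + α) * y ^ (b1 - b2) * z ^ (c1 - c2 + γ) * G * H ∧
    D3 ∈ (Ideal.span {F, G, H}) ^ 2 := by
  subst hx hy hz
  obtain ⟨s, rfl⟩ : ∃ s, a2 = a1 + s := ⟨a2 - a1, by omega⟩
  obtain ⟨b, rfl⟩ : ∃ b, b1 = b2 + b := ⟨b1 - b2, by omega⟩
  obtain ⟨t, rfl⟩ : ∃ t, c1 = c2 + t := ⟨c1 - c2, by omega⟩
  simp only [show a1 + s - a1 = s from by omega, show b2 + b - b2 = b from by omega,
    show 2 * (b2 + b) - 2 * b2 = 2 * b from by omega,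
    show c2 + t - c2 = t from by omega] at hD2 hD3 ⊢
  -- remaining truncated subtractions
  set E : ℕ := (α + (a1 + s)) - 2 * a1 with hE
  set Γ : ℕ := (γ + (c2 + t)) - 2 * c2 with hΓ
  have h2 : 2 * a1 + E = α + (a1 + s) := by omega
  have h3 : 2 * c2 + Γ = γ + (c2 + t) := by omega
  have h1 : (c2 - γ) + (c2 + γ) = 2 * c2 := by omega
  have hC : (X 0 : MvPolynomial (Fin 3) k) ^ (2 * a1) * X 2 ^ (2 * c2) ≠ 0 :=
    mul_ne_zero (pow_ne_zero _ (X_ne_zero _)) (pow_ne_zero _ (X_ne_zero _))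
  have hEq : D3 = X 0 ^ α * X 1 ^ b * X 2 ^ γ * F ^ 2
      - X 0 ^ E * X 1 ^ (2 * b) * X 2 ^ (c2 + t + γ) * G ^ 2
      - X 0 ^ (a1 + s + α) * X 2 ^ Γ * H ^ 2
      - 2 * X 0 ^ (s + α) * X 1 ^ b * X 2 ^ (t + γ) * G * H := by
    refine mul_left_cancel₀ hC ?_
    have e1 : (X 0 : MvPolynomial (Fin 3) k) ^ (2 * a1) * X 0 ^ E = X 0 ^ (α + (a1 + s)) := by
      rw [← pow_add, h2]
    have e2 : (X 2 : MvPolynomial (Fin 3) k) ^ (2 * c2) * X 2 ^ Γ = X 2 ^ (γ + (c2 + t)) := by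
      rw [← pow_add, h3]
    have lhs_eq : (X 0 : MvPolynomial (Fin 3) k) ^ (2 * a1) * X 2 ^ (2 * c2) * D3
        = X 0 ^ (2 * a1 + α) * X 2 ^ γ * H * (H * F - X 0 ^ s * X 1 ^ b * G ^ 2)
          - X 0 ^ (α + (a1 + s)) * X 1 ^ (2 * b) * X 2 ^ (c2 + γ) * G ^ 3 := by
      calc (X 0 : MvPolynomial (Fin 3) k) ^ (2 * a1) * X 2 ^ (2 * c2) * D3
          = X 0 ^ (2 * a1) * X 2 ^ (c2 + γ) * (X 2 ^ (c2 - γ) * D3) := by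
            rw [show 2 * c2 = (c2 - γ) + (c2 + γ) from h1.symm, pow_add]; ring
        _ = X 0 ^ (2 * a1) * X 2 ^ (c2 + γ)
              * (X 0 ^ α * (H * D2) - X 0 ^ E * X 1 ^ (2 * b) * G ^ 3) := by rw [hD3]
        _ = X 0 ^ (2 * a1 + α) * X 2 ^ γ * H * (X 2 ^ c2 * D2)
              - (X 0 ^ (2 * a1) * X 0 ^ E) * X 1 ^ (2 * b) * X 2 ^ (c2 + γ) * G ^ 3 := by ring
        _ = _ := by rw [hD2, e1]
    have rhs_eq : (X 0 : MvPolynomial (Fin 3) k) ^ (2 * a1) * X 2 ^ (2 * c2)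
          * (X 0 ^ α * X 1 ^ b * X 2 ^ γ * F ^ 2
            - X 0 ^ E * X 1 ^ (2 * b) * X 2 ^ (c2 + t + γ) * G ^ 2
            - X 0 ^ (a1 + s + α) * X 2 ^ Γ * H ^ 2
            - 2 * X 0 ^ (s + α) * X 1 ^ b * X 2 ^ (t + γ) * G * H)
        = X 0 ^ (2 * a1 + α) * X 1 ^ b * X 2 ^ (2 * c2 + γ) * F ^ 2
          - X 0 ^ (α + (a1 + s)) * X 1 ^ (2 * b) * X 2 ^ (2 * c2 + (c2 + t + γ)) * G ^ 2
          - X 0 ^ (2 * a1 + (a1 + s + α)) * X 2 ^ (γ + (c2 + t)) * H ^ 2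
          - 2 * X 0 ^ (2 * a1 + (s + α)) * X 1 ^ b * X 2 ^ (2 * c2 + (t + γ)) * G * H := by
      calc _ = X 0 ^ (2 * a1 + α) * X 1 ^ b * X 2 ^ (2 * c2 + γ) * F ^ 2
            - (X 0 ^ (2 * a1) * X 0 ^ E) * X 1 ^ (2 * b) * X 2 ^ (2 * c2 + (c2 + t + γ)) * G ^ 2
            - X 0 ^ (2 * a1 + (a1 + s + α)) * (X 2 ^ (2 * c2) * X 2 ^ Γ) * H ^ 2
            - 2 * X 0 ^ (2 * a1 + (s + α)) * X 1 ^ b * X 2 ^ (2 * c2 + (t + γ)) * G * H := by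
              ring
        _ = _ := by rw [e1, e2]
    rw [lhs_eq, rhs_eq, hF, hG, hH]
    ring
  refine ⟨hEq, ?_⟩
  have hFm : F ∈ Ideal.span {F, G, H} := Ideal.subset_span (by simp)
  have hGm : G ∈ Ideal.span {F, G, H} := Ideal.subset_span (by simp)
  have hHm : H ∈ Ideal.span {F, G, H} := Ideal.subset_span (by simp)
  rw [hEq, pow_two]
  refine sub_mem (sub_mem (sub_mem ?_ ?_) ?_) ?_
  · exact Ideal.mul_mem_left _ _ (by rw [sq]; exact Ideal.mul_mem_mul hFm hFm)
  · exact Ideal.mul_mem_left _ _ (by rw [sq]; exact Ideal.mul_mem_mul hGm hGm)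
  · exact Ideal.mul_mem_left _ _ (by rw [sq]; exact Ideal.mul_mem_mul hHm hHm)
  · rw [mul_assoc]
    exact Ideal.mul_mem_left _ _ (Ideal.mul_mem_mul hGm hHm)
end

section
/- For a matrix M of type 2 (a1 > a2, b1 > b2, c1 > c2), with α = max{0, 2a2 - a1}, β = max{0, 2b2 - b1}, the element D_3 = z^{-c2} y^β x^α (x^{a1-2a2} H^2 F + y^{b1-2b2} G^3) satisfies D_3 = x^{a1-2a2+α} y^{b1-b2+β} z^{c2} F^2 + x^α y^{b1-2b2+β} z^{c1} G^2 - x^{a1-a2+α} y^β z^{c1-c2} H^2 + 2 x^{a1-a2+α} y^{b1-b2+β} F G; in particular D_3 ∈ P^2, and moreover D_3 ∈ m·P^2 if the characteristic of k is not 2, where m = (x,y,z). -/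
open MvPolynomial

theorem stmt_8 {k : Type*} [Field k]
    (a1 a2 b1 b2 c1 c2 : ℕ)
    (ha2 : 0 < a2) (hb2 : 0 < b2) (hc2 : 0 < c2)
    (ha : a2 < a1) (hb : b2 < b1) (hc : c2 < c1)
    (α β : ℕ) (hα : α = 2 * a2 - a1) (hβ : β = 2 * b2 - b1)
    (x y z F G H D3 : MvPolynomial (Fin 3) k)
    (hx : x = X 0) (hy : y = X 1) (hz : z = X 2)
    (hF : F = y ^ (b1 + b2) - x ^ a2 * z ^ c1)
    (hG : G = z ^ (c1 + c2) - y ^ b2 * x ^ a1)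
    (hH : H = x ^ (a1 + a2) - z ^ c2 * y ^ b1)
    (hD3 : z ^ c2 * D3
      = x ^ ((α + a1) - 2 * a2) * y ^ β * (H ^ 2 * F)
        + x ^ α * y ^ ((β + b1) - 2 * b2) * G ^ 3) :
    D3 = x ^ ((α + a1) - 2 * a2) * y ^ (b1 - b2 + β) * z ^ c2 * F ^ 2
      + x ^ α * y ^ ((β + b1) - 2 * b2) * z ^ c1 * G ^ 2
      - x ^ (a1 - a2 + α) * y ^ β * z ^ (c1 - c2) * H ^ 2
      + 2 * x ^ (a1 - a2 + α) * y ^ (b1 - b2 + β) * F * G ∧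
    D3 ∈ (Ideal.span {F, G, H}) ^ 2 ∧
    (ringChar k ≠ 2 →
      D3 ∈ Ideal.span {x, y, z} * (Ideal.span {F, G, H}) ^ 2) := by
  have hzne : (z : MvPolynomial (Fin 3) k) ^ c2 ≠ 0 := by
    rw [hz]; exact pow_ne_zero _ (X_ne_zero 2)
  -- main identity
  have key : z ^ c2 * D3
      = z ^ c2 * (x ^ ((α + a1) - 2 * a2) * y ^ (b1 - b2 + β) * z ^ c2 * F ^ 2
      + x ^ α * y ^ ((β + b1) - 2 * b2) * z ^ c1 * G ^ 2
      - x ^ (a1 - a2 + α) * y ^ β * z ^ (c1 - c2) * H ^ 2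
      + 2 * x ^ (a1 - a2 + α) * y ^ (b1 - b2 + β) * F * G) := by
    rw [hD3, hF, hG, hH]
    rw [show x ^ (a1 - a2 + α) = x ^ ((α + a1) - 2 * a2) * x ^ a2 by
      rw [← pow_add]; congr 1; omega]
    rw [show y ^ (b1 - b2 + β) = y ^ ((β + b1) - 2 * b2) * y ^ b2 by
      rw [← pow_add]; congr 1; omega]
    rw [show z ^ c1 = z ^ (c1 - c2) * z ^ c2 by
      rw [← pow_add]; congr 1; omega]
    rw [show z ^ (c1 + c2) = z ^ (c1 - c2) * z ^ c2 * z ^ c2 by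
      rw [← pow_add, ← pow_add]; congr 1; omega]
    rw [show x ^ (a1 + a2) = x ^ a1 * x ^ a2 by rw [← pow_add]]
    rw [show y ^ (b1 + b2) = y ^ b1 * y ^ b2 by rw [← pow_add]]
    have e1 : x ^ ((α + a1) - 2 * a2) * (x ^ a2 * x ^ a2) = x ^ α * x ^ a1 := by
      rw [← pow_add, ← pow_add, ← pow_add]; congr 1; omega
    have e2 : y ^ ((β + b1) - 2 * b2) * (y ^ b2 * y ^ b2) = y ^ β * y ^ b1 := by
      rw [← pow_add, ← pow_add, ← pow_add]; congr 1; omega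
    linear_combination
      ((x ^ a1) ^ 2 * y ^ β * y ^ b1 * y ^ b2
        + y ^ ((β + b1) - 2 * b2) * y ^ b2 * (z ^ (c1 - c2)) ^ 2 * (z ^ c2) ^ 4
        - 2 * x ^ a1 * y ^ ((β + b1) - 2 * b2) * (y ^ b2) ^ 2
            * z ^ (c1 - c2) * (z ^ c2) ^ 2) * e1
      + (-(x ^ α * (x ^ a1) ^ 3 * y ^ b2)
        - x ^ ((α + a1) - 2 * a2) * (y ^ b1) ^ 2 * y ^ b2 * (z ^ c2) ^ 2
        + 2 * x ^ ((α + a1) - 2 * a2) * x ^ a1 * x ^ a2 * y ^ b1 * y ^ b2 * z ^ c2) * e2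
  have hEq : D3 = x ^ ((α + a1) - 2 * a2) * y ^ (b1 - b2 + β) * z ^ c2 * F ^ 2
      + x ^ α * y ^ ((β + b1) - 2 * b2) * z ^ c1 * G ^ 2
      - x ^ (a1 - a2 + α) * y ^ β * z ^ (c1 - c2) * H ^ 2
      + 2 * x ^ (a1 - a2 + α) * y ^ (b1 - b2 + β) * F * G :=
    mul_left_cancel₀ hzne key
  set P : Ideal (MvPolynomial (Fin 3) k) := Ideal.span {F, G, H} with hP
  have hFP : F ∈ P := Ideal.subset_span (by simp)
  have hGP : G ∈ P := Ideal.subset_span (by simp)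
  have hHP : H ∈ P := Ideal.subset_span (by simp)
  have hF2 : F ^ 2 ∈ P ^ 2 := Ideal.pow_mem_pow hFP 2
  have hG2 : G ^ 2 ∈ P ^ 2 := Ideal.pow_mem_pow hGP 2
  have hH2 : H ^ 2 ∈ P ^ 2 := Ideal.pow_mem_pow hHP 2
  have hFG : F * G ∈ P ^ 2 := by
    rw [pow_two]; exact Ideal.mul_mem_mul hFP hGP
  refine ⟨hEq, ?_, fun _ => ?_⟩
  · rw [hEq]
    refine add_mem (sub_mem (add_mem ?_ ?_) ?_) ?_
    · exact Ideal.mul_mem_left _ _ hF2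
    · exact Ideal.mul_mem_left _ _ hG2
    · exact Ideal.mul_mem_left _ _ hH2
    · have : (2 : MvPolynomial (Fin 3) k) * x ^ (a1 - a2 + α) * y ^ (b1 - b2 + β) * F * G
          = (2 * x ^ (a1 - a2 + α) * y ^ (b1 - b2 + β)) * (F * G) := by ring
      rw [this]; exact Ideal.mul_mem_left _ _ hFG
  · set m : Ideal (MvPolynomial (Fin 3) k) := Ideal.span {x, y, z} with hm
    have hxm : x ∈ m := Ideal.subset_span (by simp)
    have hym : y ∈ m := Ideal.subset_span (by simp)
    have hzm : z ∈ m := Ideal.subset_span (by simp)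
    have hzc2 : z ^ c2 ∈ m := Ideal.pow_mem_of_mem m hzm c2 hc2
    have hzc1 : z ^ c1 ∈ m := Ideal.pow_mem_of_mem m hzm c1 (by omega)
    have hxa : x ^ (a1 - a2 + α) ∈ m := Ideal.pow_mem_of_mem m hxm _ (by omega)
    rw [hEq]
    refine add_mem (sub_mem (add_mem ?_ ?_) ?_) ?_
    · have : x ^ ((α + a1) - 2 * a2) * y ^ (b1 - b2 + β) * z ^ c2 * F ^ 2
          = z ^ c2 * (x ^ ((α + a1) - 2 * a2) * y ^ (b1 - b2 + β) * F ^ 2) := by ring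
      rw [this]
      exact Ideal.mul_mem_mul hzc2 (Ideal.mul_mem_left _ _ hF2)
    · have : x ^ α * y ^ ((β + b1) - 2 * b2) * z ^ c1 * G ^ 2
          = z ^ c1 * (x ^ α * y ^ ((β + b1) - 2 * b2) * G ^ 2) := by ring
      rw [this]
      exact Ideal.mul_mem_mul hzc1 (Ideal.mul_mem_left _ _ hG2)
    · have : x ^ (a1 - a2 + α) * y ^ β * z ^ (c1 - c2) * H ^ 2
          = x ^ (a1 - a2 + α) * (y ^ β * z ^ (c1 - c2) * H ^ 2) := by ring
      rw [this]
      exact Ideal.mul_mem_mul hxa (Ideal.mul_mem_left _ _ hH2)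
    · have : (2 : MvPolynomial (Fin 3) k) * x ^ (a1 - a2 + α) * y ^ (b1 - b2 + β) * F * G
          = x ^ (a1 - a2 + α) * (2 * y ^ (b1 - b2 + β) * (F * G)) := by ring
      rw [this]
      exact Ideal.mul_mem_mul hxa (Ideal.mul_mem_left _ _ hFG)
end

section
/- Let M be a matrix of type 1' with a2 = (r-1)a1 where r = ⌊a2/a1⌋ + 1, and suppose the ideal I_2(M) is prime. Then c1 > (r-1)c2. (Equivalently: if c1 = (r-1)c2 and a2 = (r-1)a1, then I_2(M) is not prime, because with X = x^{a1}, Z = z^{c2}, Y = y^{b}, one has X^r - YZ - (Z^r - YX) = (X - Z)(X^{r-1} + X^{r-2}Z + ... + Z^{r-1} + Y).) -/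
open MvPolynomial

lemma key {R : Type*} [CommRing R] (ψ : R →+* Polynomial R)
    (F G H P : R) (eF eG eH dP : ℕ)
    (hF : ψ F = Polynomial.C F * Polynomial.X ^ eF)
    (hG : ψ G = Polynomial.C G * Polynomial.X ^ eG)
    (hH : ψ H = Polynomial.C H * Polynomial.X ^ eH)
    (hP : ψ P = Polynomial.C P * Polynomial.X ^ dP)
    (h1 : dP < eF) (h2 : dP < eG) (h3 : dP < eH)
    (hm : P ∈ Ideal.span {F, G, H}) : P = 0 := by
  have h : ψ P ∈ Ideal.span {ψ F, ψ G, ψ H} := by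
    have h0 := Ideal.mem_map_of_mem ψ hm
    rwa [Ideal.map_span, Set.image_insert_eq, Set.image_insert_eq, Set.image_singleton] at h0
  rw [Ideal.mem_span_insert] at h
  obtain ⟨a, z1, hz1, heq⟩ := h
  rw [Ideal.mem_span_insert] at hz1
  obtain ⟨b, z2, hz2, heq2⟩ := hz1
  rw [Ideal.mem_span_singleton] at hz2
  obtain ⟨c, hc⟩ := hz2
  rw [hP, heq2, hc, hF, hG, hH] at heq
  have := congrArg (fun p => Polynomial.coeff p dP) heq
  simp only [Polynomial.coeff_add] at this
  rw [show a * (Polynomial.C F * Polynomial.X ^ eF) = a * Polynomial.C F * Polynomial.X ^ eF by ring,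
    show b * (Polynomial.C G * Polynomial.X ^ eG) = b * Polynomial.C G * Polynomial.X ^ eG by ring,
    show Polynomial.C H * Polynomial.X ^ eH * c = c * Polynomial.C H * Polynomial.X ^ eH by ring,
    Polynomial.coeff_mul_X_pow', Polynomial.coeff_mul_X_pow', Polynomial.coeff_mul_X_pow',
    Polynomial.coeff_mul_X_pow'] at this
  simp only [if_neg (by omega : ¬ eF ≤ dP), if_neg (by omega : ¬ eG ≤ dP),
    if_neg (by omega : ¬ eH ≤ dP), if_pos (le_refl dP), Nat.sub_self,
    Polynomial.coeff_C_zero, add_zero] at this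
  simpa using this

theorem stmt_10 {k : Type*} [Field k]
    (a1 a2 b c1 c2 r : ℕ)
    (ha1 : 0 < a1) (hb : 0 < b) (hc2 : 0 < c2)
    (ha : a1 ≤ a2) (hc : c2 ≤ c1)
    (hslope : a2 * c2 ≤ a1 * c1)
    (hr : r = a2 / a1 + 1)
    (ha2 : a2 = (r - 1) * a1)
    (x y z F G H : MvPolynomial (Fin 3) k)
    (hx : x = X 0) (hy : y = X 1) (hz : z = X 2)
    (hF : F = y ^ (2 * b) - x ^ a2 * z ^ c1)
    (hG : G = z ^ (c1 + c2) - y ^ b * x ^ a1)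
    (hH : H = x ^ (a1 + a2) - z ^ c2 * y ^ b)
    (hprime : (Ideal.span {F, G, H} : Ideal (MvPolynomial (Fin 3) k)).IsPrime) :
    (r - 1) * c2 < c1 := by
  by_contra hlt
  push_neg at hlt
  have hr2 : 2 ≤ r := by
    have h1 : 1 ≤ a2 / a1 := (Nat.one_le_div_iff ha1).mpr ha
    omega
  obtain ⟨s, rfl⟩ : ∃ s, r = s + 2 := ⟨r - 2, by omega⟩
  simp only [show s + 2 - 1 = s + 1 by omega] at ha2 hlt ⊢
  -- hlt : c1 ≤ (s+1)*c2 ; ha2 : a2 = (s+1)*a1 ; goal: (s+1)*c2 < c1, contradiction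
  have hc1 : c1 = (s + 1) * c2 := by
    have h1 : a1 * ((s + 1) * c2) ≤ a1 * c1 := by
      calc a1 * ((s + 1) * c2) = a2 * c2 := by rw [ha2]; ring
        _ ≤ a1 * c1 := hslope
    have := Nat.le_of_mul_le_mul_left h1 ha1
    omega
  exfalso
  -- weights
  set wx := b * c2 with hwx
  set wy := (s + 1) * (a1 * c2) with hwy
  set wz := a1 * b with hwz
  set d := a1 * (b * c2) with hd
  have hd0 : 0 < d := by positivity
  set φ : Fin 3 → Polynomial (MvPolynomial (Fin 3) k) :=
    ![Polynomial.C x * Polynomial.X ^ wx, Polynomial.C y * Polynomial.X ^ wy,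
      Polynomial.C z * Polynomial.X ^ wz] with hφ
  set ψ : MvPolynomial (Fin 3) k →+* Polynomial (MvPolynomial (Fin 3) k) := (aeval φ : MvPolynomial (Fin 3) k →ₐ[k] Polynomial (MvPolynomial (Fin 3) k)).toRingHom with hψ
  have ψx : ψ x = Polynomial.C x * Polynomial.X ^ wx := by
    simp [hψ, hφ, hx]
  have ψy : ψ y = Polynomial.C y * Polynomial.X ^ wy := by
    simp [hψ, hφ, hy]
  have ψz : ψ z = Polynomial.C z * Polynomial.X ^ wz := by
    simp [hψ, hφ, hz]
  have hpow : ∀ (p : MvPolynomial (Fin 3) k) (cp n e : ℕ), ψ p = Polynomial.C p * Polynomial.X ^ cp → cp * n = e →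
      ψ (p ^ n) = Polynomial.C (p ^ n) * Polynomial.X ^ e := by
    intro p cp n e hp he
    rw [map_pow, hp, mul_pow, ← pow_mul, ← Polynomial.C_pow, he]
  have ψF : ψ F = Polynomial.C F * Polynomial.X ^ (2 * (s + 1) * d) := by
    rw [hF, map_sub, map_mul, hpow y wy (2 * b) (2 * (s + 1) * d) ψy (by rw [hwy, hd]; ring),
      hpow x wx a2 ((s + 1) * d) ψx (by rw [hwx, hd, ha2]; ring),
      hpow z wz c1 ((s + 1) * d) ψz (by rw [hwz, hd, hc1]; ring),
      map_sub, map_mul]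
    ring
  have ψG : ψ G = Polynomial.C G * Polynomial.X ^ ((s + 2) * d) := by
    rw [hG, map_sub, map_mul, hpow z wz (c1 + c2) ((s + 2) * d) ψz (by rw [hwz, hd, hc1]; ring),
      hpow y wy b ((s + 1) * d) ψy (by rw [hwy, hd]; ring),
      hpow x wx a1 d ψx (by rw [hwx, hd]; ring),
      map_sub, map_mul]
    rw [show (s + 2) * d = (s + 1) * d + d by ring, pow_add]
    ring
  have ψH : ψ H = Polynomial.C H * Polynomial.X ^ ((s + 2) * d) := by
    rw [hH, map_sub, map_mul, hpow x wx (a1 + a2) ((s + 2) * d) ψx (by rw [hwx, hd, ha2]; ring),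
      hpow z wz c2 d ψz (by rw [hwz, hd]; ring),
      hpow y wy b ((s + 1) * d) ψy (by rw [hwy, hd]; ring),
      map_sub, map_mul]
    rw [show (s + 2) * d = d + (s + 1) * d by ring, pow_add]
    ring
  -- the two factors
  set P : MvPolynomial (Fin 3) k := x ^ a1 - z ^ c2 with hP
  set Q : MvPolynomial (Fin 3) k := (∑ i ∈ Finset.range (s + 2), (x ^ a1) ^ i * (z ^ c2) ^ (s + 1 - i)) + y ^ b with hQ
  have ψP : ψ P = Polynomial.C P * Polynomial.X ^ d := by
    rw [hP, map_sub, hpow x wx a1 d ψx (by rw [hwx, hd]; ring),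
      hpow z wz c2 d ψz (by rw [hwz, hd]; ring), map_sub]
    ring
  have ψQ : ψ Q = Polynomial.C Q * Polynomial.X ^ ((s + 1) * d) := by
    rw [hQ, map_add, map_sum, hpow y wy b ((s + 1) * d) ψy (by rw [hwy, hd]; ring)]
    have hterm : ∀ i ∈ Finset.range (s + 2),
        ψ ((x ^ a1) ^ i * (z ^ c2) ^ (s + 1 - i)) =
        Polynomial.C ((x ^ a1) ^ i * (z ^ c2) ^ (s + 1 - i)) * Polynomial.X ^ ((s + 1) * d) := by
      intro i hi
      rw [Finset.mem_range] at hi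
      have hxa : ψ (x ^ a1) = Polynomial.C (x ^ a1) * Polynomial.X ^ d :=
        hpow x wx a1 d ψx (by rw [hwx, hd]; ring)
      have hzc : ψ (z ^ c2) = Polynomial.C (z ^ c2) * Polynomial.X ^ d :=
        hpow z wz c2 d ψz (by rw [hwz, hd]; ring)
      rw [map_mul, hpow (x ^ a1) d i (d * i) hxa rfl,
        hpow (z ^ c2) d (s + 1 - i) (d * (s + 1 - i)) hzc rfl,
        show (s + 1) * d = d * i + d * (s + 1 - i) by
          rw [← Nat.mul_add, show i + (s + 1 - i) = s + 1 by omega]; ring,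
        pow_add]
      simp only [Polynomial.C_mul, Polynomial.C_pow]
      ring
    rw [Finset.sum_congr rfl hterm, ← Finset.sum_mul]
    simp only [map_add, map_sum, add_mul]
  -- product identity
  have hs21 : s + 2 - 1 = s + 1 := by omega
  have hgeom := geom_sum₂_mul (x ^ a1) (z ^ c2) (s + 2)
  rw [hs21] at hgeom
  have hPQ : P * Q = H - G := by
    rw [hP, hQ, hH, hG, hc1, ha2,
      show a1 + (s + 1) * a1 = a1 * (s + 2) by ring, pow_mul,
      show (s + 1) * c2 + c2 = c2 * (s + 2) by ring, pow_mul]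
    linear_combination hgeom
  have hlt1 : d < 2 * (s + 1) * d := by
    rw [Nat.lt_mul_iff_one_lt_left hd0]; omega
  have hlt2 : d < (s + 2) * d := by
    rw [Nat.lt_mul_iff_one_lt_left hd0]; omega
  have hlt3 : (s + 1) * d < 2 * (s + 1) * d :=
    (Nat.mul_lt_mul_right hd0).mpr (by omega)
  have hlt4 : (s + 1) * d < (s + 2) * d :=
    (Nat.mul_lt_mul_right hd0).mpr (by omega)
  have hPQmem : P * Q ∈ Ideal.span {F, G, H} := by
    rw [hPQ]
    exact Ideal.sub_mem _ (Ideal.subset_span (by simp)) (Ideal.subset_span (by simp))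
  rcases hprime.mem_or_mem hPQmem with hmem | hmem
  · have hP0 : P = 0 :=
      key ψ F G H P (2 * (s + 1) * d) ((s + 2) * d) ((s + 2) * d) d ψF ψG ψH ψP hlt1 hlt2 hlt2 hmem
    have heval := congrArg (eval (![1, 0, 0] : Fin 3 → k)) hP0
    rw [hP] at heval
    simp [hx, hz, zero_pow hc2.ne', zero_pow ha1.ne'] at heval
  · have hQ0 : Q = 0 :=
      key ψ F G H Q (2 * (s + 1) * d) ((s + 2) * d) ((s + 2) * d) ((s + 1) * d) ψF ψG ψH ψQ hlt3 hlt4 hlt4 hmem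
    have heval := congrArg (eval (![0, 1, 0] : Fin 3 → k)) hQ0
    rw [hQ] at heval
    simp only [map_add, map_sum, map_mul, map_pow, eval_X, hx, hy, hz, Matrix.cons_val_zero,
      Matrix.cons_val_one, Matrix.head_cons, Matrix.cons_val_two, Matrix.tail_cons,
      one_pow, zero_pow ha1.ne', zero_pow hc2.ne'] at heval
    rw [Finset.sum_eq_zero, zero_add] at heval
    · exact one_ne_zero heval
    · intro i hi
      rcases Nat.eq_zero_or_pos i with hi0 | hi0
      · subst hi0
        rw [pow_zero, one_mul, zero_pow (by omega : s + 1 - 0 ≠ 0)]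
      · rw [zero_pow hi0.ne', zero_mul]
end

section
/- Let M be of type 1' (a1 ≤ a2, b1 = b2 = b, c1 ≥ c2, a2/a1 ≤ c1/c2) and r = ⌊a2/a1⌋ + 1. Define D_0 = -y^b and D_l = x^{α_l} z^{γ_l - c2}(H D_{l-1} - x^{a2-(l-1)a1} G^l) with α_l = max{0, (l-1)a1 - a2}, γ_l = max{0, (l-1)c2 - c1}. Then for 1 ≤ l ≤ r, D_l is a polynomial (all divisions are exact) and D_l ≡ (-y^b)^{l+1} - x^{(l-1)a1 + l a2} z^{c1 - (l-1)c2} modulo the ideal (x^{a2 - (l-1)a1} z^{c1 - (l-1)c2 + 1}). -/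
open MvPolynomial Finset

noncomputable def Eaux {k : Type*} [Field k] (a1 a2 c2 b : ℕ)
    (x y z G : MvPolynomial (Fin 3) k) : ℕ → MvPolynomial (Fin 3) k
  | 0 => 0
  | 1 => 0
  | (m+2) => x^(2*a1+a2) * Eaux a1 a2 c2 b x y z G (m+1)
      - y^b * x^a1 * z^c2 * Eaux a1 a2 c2 b x y z G (m+1)
      + y^b * x^((2*m+1)*a1+m*a2) * z^(c2-1)
      - z^(m*c2+(c2-1)) * ∑ i ∈ Finset.range (m+2), G^i * (-(y^b) * x^a1)^(m+2-1-i)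

noncomputable def Daux {k : Type*} [Field k] (a1 a2 c1 c2 b : ℕ)
    (x y z G : MvPolynomial (Fin 3) k) : ℕ → MvPolynomial (Fin 3) k
  | 0 => -(y^b)
  | (n+1) => (-(y^b))^(n+2) - x^(n*a1+(n+1)*a2) * z^(c1-n*c2)
      + x^(a2-n*a1) * z^(c1-n*c2+1) * Eaux a1 a2 c2 b x y z G (n+1)

theorem stmt_12 {k : Type*} [Field k]
    (a1 a2 b c1 c2 r : ℕ)
    (ha1 : 0 < a1) (hb : 0 < b) (hc2 : 0 < c2)
    (ha : a1 ≤ a2) (hc : c2 ≤ c1)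
    (hslope : a2 * c2 ≤ a1 * c1)
    (hr : r = a2 / a1 + 1)
    (x y z F G H : MvPolynomial (Fin 3) k)
    (hx : x = X 0) (hy : y = X 1) (hz : z = X 2)
    (hF : F = y ^ (2 * b) - x ^ a2 * z ^ c1)
    (hG : G = z ^ (c1 + c2) - y ^ b * x ^ a1)
    (hH : H = x ^ (a1 + a2) - z ^ c2 * y ^ b) :
    ∃ D : ℕ → MvPolynomial (Fin 3) k,
      D 0 = -(y ^ b) ∧
      (∀ l, 1 ≤ l → l ≤ r →
        z ^ (c2 - ((l - 1) * c2 - c1)) * D l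
          = x ^ ((l - 1) * a1 - a2) * (H * D (l - 1))
            - x ^ ((((l - 1) * a1 - a2) + a2) - (l - 1) * a1) * G ^ l) ∧
      (∀ l, 1 ≤ l → l ≤ r →
        D l - ((-(y ^ b)) ^ (l + 1)
            - x ^ ((l - 1) * a1 + l * a2) * z ^ (c1 - (l - 1) * c2))
          ∈ Ideal.span {x ^ (a2 - (l - 1) * a1) * z ^ (c1 - (l - 1) * c2 + 1)}) := by
  refine ⟨Daux a1 a2 c1 c2 b x y z G, by simp [Daux], ?_, ?_⟩
  · -- recursion identity
    intro l hl1 hl2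
    obtain ⟨n, rfl⟩ : ∃ n, l = n + 1 := ⟨l - 1, by omega⟩
    have hna : n * a1 ≤ a2 := by
      have hn : n ≤ a2 / a1 := by omega
      calc n * a1 ≤ (a2 / a1) * a1 := Nat.mul_le_mul_right _ hn
        _ ≤ a2 := Nat.div_mul_le_self _ _
    have hnc : n * c2 ≤ c1 := by
      have h3 : a1 * (n * c2) ≤ a1 * c1 := by
        calc a1 * (n * c2) = (n * a1) * c2 := by ring
          _ ≤ a2 * c2 := Nat.mul_le_mul_right _ hna
          _ ≤ a1 * c1 := hslope
      exact Nat.le_of_mul_le_mul_left h3 ha1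
    simp only [Nat.add_sub_cancel]
    rw [Nat.sub_eq_zero_of_le hnc, Nat.sub_eq_zero_of_le hna]
    simp only [Nat.sub_zero, pow_zero, one_mul, Nat.zero_add]
    -- goal: z^c2 * Daux (n+1) = H * Daux n - x^(a2 - n*a1) * G^(n+1)
    match n, hna, hnc with
    | 0, hna, hnc =>
      simp only [Daux, Eaux]
      norm_num
      rw [hG, hH]
      ring
    | (m+1), h1, h2 =>
      obtain ⟨A, rfl⟩ : ∃ A, a2 = (m+1)*a1 + A := ⟨a2 - (m+1)*a1, by omega⟩
      obtain ⟨P, rfl⟩ : ∃ P, c1 = (m+1)*c2 + P := ⟨c1 - (m+1)*c2, by omega⟩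
      obtain ⟨C, rfl⟩ : ∃ C, c2 = C + 1 := ⟨c2 - 1, by omega⟩
      simp only [Daux, Eaux]
      have hgeom := geom_sum₂_mul G (-(y^b) * x^a1) (m+2)
      rw [show G - -(y^b) * x^a1 = z^(((m+1)*(C+1)+P)+(C+1)) from by rw [hG]; ring] at hgeom
      rw [show m+2-1 = m+1 from rfl] at hgeom ⊢
      rw [hH]
      rw [show (m+1)*a1 + A - (m+1)*a1 = A from by omega,
          show (m+1)*(C+1)+P - (m+1)*(C+1) = P from by omega,
          show (m+1)*a1 + A - m*a1 = a1 + A from by rw [add_mul, one_mul]; omega,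
          show (m+1)*(C+1)+P - m*(C+1) = (C+1) + P from by rw [add_mul, one_mul]; omega,
          show C+1-1 = C from by omega]
      linear_combination (-(x^A)) * hgeom
  · -- ideal membership
    intro l hl1 hl2
    obtain ⟨n, rfl⟩ : ∃ n, l = n + 1 := ⟨l - 1, by omega⟩
    simp only [Daux, Nat.add_sub_cancel]
    rw [Ideal.mem_span_singleton]
    exact ⟨Eaux a1 a2 c2 b x y z G (n+1), by ring⟩
end

section
/- With M of type 1' and r = ⌊a2/a1⌋ + 1: if a2 > (r-1)a1 then D_l ≡ (-y^b)^{l+1} (mod x) for 1 ≤ l ≤ r; if a2 = (r-1)a1 (and I_2(M) prime) then D_l ≡ (-y^b)^{l+1} (mod z) for 1 ≤ l ≤ r. -/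
open MvPolynomial

/-!
For `l ≤ r` the truncated exponents in the recursion vanish, so
`z^c2 D_l = H D_{l-1} - x^(a2-(l-1)a1) G^l`. For the error `E_l = D_l - (-y^b)^(l+1)` this gives
`z^c2 E_l = H E_{l-1} - x^(a2-(l-1)a1) (G^l - (-y^b x^a1)^l)`, where `G + y^b x^a1 = z^(c1+c2)`.
If `a2 > (r-1)a1` every `x^(a2-(l-1)a1)` is divisible by the prime `x`, which does not divide `z^c2`.
If `a2 = (r-1)a1` and `(r-1)c2 < c1`, induction shows that `z^(c1+c2-l c2)` divides `E_l`.
If `a2 = s a1` and `c1 = s c2`, the ideal `(F, G, H)` is not prime: with `u = x^a1`, `v = z^c2`,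
`(u - v)(∑ u^i v^(s-i) + y^b) = H - G`, and for the weights `x, y, z ↦ b c2, s a1 c2, b a1`
the generators are homogeneous of larger degree than either factor.
-/

section ErrorRecursion

variable {R : Type*} [CommRing R] {t w u H G : R} {X D : ℕ → R} {r n : ℕ}

theorem mul_sub_neg_pow_succ (hH : H = X n * u ^ (n + 1) - t * w)
    (hrec : t * D (n + 1) = H * D n - X n * G ^ (n + 1)) :
    t * (D (n + 1) - (-w) ^ (n + 2)) =
      H * (D n - (-w) ^ (n + 1)) - X n * (G ^ (n + 1) - (-(w * u)) ^ (n + 1)) := by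
  linear_combination hrec + (-w) ^ (n + 1) * hH

theorem dvd_sub_neg_pow_of_prime {π : R} (hπ : Prime π) (ht : ¬π ∣ t) (hX : ∀ n < r, π ∣ X n)
    (hD0 : D 0 = -w) (hH : ∀ n < r, H = X n * u ^ (n + 1) - t * w)
    (hrec : ∀ n < r, t * D (n + 1) = H * D n - X n * G ^ (n + 1)) :
    ∀ l ≤ r, π ∣ D l - (-w) ^ (l + 1) := by
  intro l hl
  induction l with
  | zero => simp [hD0]
  | succ n ih =>
    have hn : n < r := hl
    have htD : π ∣ t * (D (n + 1) - (-w) ^ (n + 2)) := by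
      rw [mul_sub_neg_pow_succ (hH n hn) (hrec n hn)]
      exact dvd_sub (dvd_mul_of_dvd_right (ih hn.le) _) (dvd_mul_of_dvd_left (hX n hn) _)
    exact (hπ.dvd_or_dvd htD).resolve_left ht

theorem pow_dvd_sub_neg_pow [IsDomain R] {s : R} {c c' : ℕ} (hs : s ≠ 0) (ht : t = s ^ c')
    (hG : G + w * u = s ^ (c + c')) (hc : ∀ n < r, n * c' ≤ c)
    (hD0 : D 0 = -w) (hH : ∀ n < r, H = X n * u ^ (n + 1) - t * w)
    (hrec : ∀ n < r, t * D (n + 1) = H * D n - X n * G ^ (n + 1)) :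
    ∀ l ≤ r, s ^ (c + c' - l * c') ∣ D l - (-w) ^ (l + 1) := by
  intro l hl
  induction l with
  | zero => simp [hD0]
  | succ n ih =>
    have hn : n < r := hl
    have hGpow : s ^ (c + c') ∣ G ^ (n + 1) - (-(w * u)) ^ (n + 1) := by
      simpa [← hG] using sub_dvd_pow_sub_pow G (-(w * u)) (n + 1)
    have hsplit : t * s ^ (c + c' - (n + 1) * c') = s ^ (c + c' - n * c') := by
      rw [ht, ← pow_add, add_one_mul]
      have := hc n hn
      congr 1
      omega
    rw [← mul_dvd_mul_iff_left (ht ▸ pow_ne_zero c' hs), mul_sub_neg_pow_succ (hH n hn) (hrec n hn),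
      hsplit]
    exact dvd_sub (dvd_mul_of_dvd_right (ih hn.le) _)
      (dvd_mul_of_dvd_right ((pow_dvd_pow s (Nat.sub_le _ _)).trans hGpow) _)

end ErrorRecursion

section WeightedHomogeneous

attribute [local instance] weightedGradedAlgebra

variable {σ R : Type*} [CommSemiring R] {w : σ → ℕ}

theorem weightedHomogeneousComponent_mul_of_lt {p g : MvPolynomial σ R} {d m : ℕ}
    (hg : IsWeightedHomogeneous w g d) (hm : m < d) :
    weightedHomogeneousComponent w m (p * g) = 0 := by
  rw [← weightedDecomposition.decompose'_apply]
  exact DirectSum.coe_decompose_mul_of_right_mem_of_not_le _ hg hm.not_ge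

theorem IsWeightedHomogeneous.eq_zero_of_mem_span {S : Set (MvPolynomial σ R)}
    {f : MvPolynomial σ R} {m : ℕ} (hS : ∀ g ∈ S, ∃ d, m < d ∧ IsWeightedHomogeneous w g d)
    (hf : IsWeightedHomogeneous w f m) (hfS : f ∈ Ideal.span S) : f = 0 := by
  have key : ∀ q ∈ Ideal.span S, ∀ p, weightedHomogeneousComponent w m (p * q) = 0 := by
    intro q hq
    induction hq using Submodule.span_induction with
    | mem g hg =>
      obtain ⟨d, hd, hgd⟩ := hS g hg
      exact fun p => weightedHomogeneousComponent_mul_of_lt hgd hd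
    | zero => simp
    | add q q' _ _ hq hq' => intro p; simp [mul_add, hq, hq']
    | smul a q _ hq => intro p; rw [smul_eq_mul, ← mul_assoc]; exact hq _
  simpa [hf.weightedHomogeneousComponent_same] using key f hfS 1

end WeightedHomogeneous

theorem sub_mul_geom_sum_add {R : Type*} [CommRing R] (u v w : R) (s : ℕ) :
    (u - v) * (∑ i ∈ Finset.range (s + 1), u ^ i * v ^ (s - i) + w) =
      (u ^ (s + 1) - v * w) - (v ^ (s + 1) - w * u) := by
  have := geom_sum₂_mul u v (s + 1)
  simp only [Nat.add_sub_cancel] at this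
  linear_combination this

theorem not_isPrime_span_of_exponents_proportional {R : Type*} [CommRing R] [Nontrivial R]
    {a1 a2 b c1 c2 s : ℕ}
    (ha1 : 0 < a1) (hb : 0 < b) (hc2 : 0 < c2) (hs : 0 < s) (ha2 : a2 = s * a1)
    (hc1 : c1 = s * c2) :
    ¬(Ideal.span {X 1 ^ (2 * b) - X 0 ^ a2 * X 2 ^ c1, X 2 ^ (c1 + c2) - X 1 ^ b * X 0 ^ a1,
      X 0 ^ (a1 + a2) - X 2 ^ c2 * X 1 ^ b} : Ideal (MvPolynomial (Fin 3) R)).IsPrime := by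
  set I : Ideal (MvPolynomial (Fin 3) R) := Ideal.span {X 1 ^ (2 * b) - X 0 ^ a2 * X 2 ^ c1,
    X 2 ^ (c1 + c2) - X 1 ^ b * X 0 ^ a1, X 0 ^ (a1 + a2) - X 2 ^ c2 * X 1 ^ b}
  intro hP
  set u : MvPolynomial (Fin 3) R := X 0 ^ a1
  set v : MvPolynomial (Fin 3) R := X 2 ^ c2
  set P := ∑ i ∈ Finset.range (s + 1), u ^ i * v ^ (s - i)
  set w : Fin 3 → ℕ := ![b * c2, s * a1 * c2, b * a1]
  set d := a1 * b * c2
  have hd : 0 < d := by positivity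
  have hX : ∀ i n e, n * w i = e → IsWeightedHomogeneous w (X i ^ n : MvPolynomial (Fin 3) R) e :=
    fun i n e he => he ▸ (isWeightedHomogeneous_X R w i).pow n
  have hXX : ∀ i j n n' e, n * w i + n' * w j = e →
      IsWeightedHomogeneous w (X i ^ n * X j ^ n' : MvPolynomial (Fin 3) R) e :=
    fun i j n n' e he => he ▸ (hX i n _ rfl).mul (hX j n' _ rfl)
  have hlow : ∀ f m, m ≤ s * d → IsWeightedHomogeneous w f m → f ∈ I → f = 0 := by
    refine fun f m hm hf hfI => IsWeightedHomogeneous.eq_zero_of_mem_span ?_ hf hfI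
    simp only [Set.mem_insert_iff, Set.mem_singleton_iff, forall_eq_or_imp, forall_eq]
    refine ⟨⟨2 * s * d, by nlinarith, ?_⟩, ⟨(s + 1) * d, by nlinarith, ?_⟩,
      ⟨(s + 1) * d, by nlinarith, ?_⟩⟩
    · exact (hX 1 _ _ (by simp [w, d]; ring)).sub (hXX 0 2 _ _ _ (by simp [w, d, ha2, hc1]; ring))
    · exact (hX 2 _ _ (by simp [w, d, hc1]; ring)).sub (hXX 1 0 _ _ _ (by simp [w, d]; ring))
    · exact (hX 0 _ _ (by simp [w, d, ha2]; ring)).sub (hXX 2 1 _ _ _ (by simp [w, d]; ring))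
  have hu : IsWeightedHomogeneous w u d := hX 0 a1 d (by simp [w, d]; ring)
  have hv : IsWeightedHomogeneous w v d := hX 2 c2 d (by simp [w, d]; ring)
  have hPy : IsWeightedHomogeneous w (P + X 1 ^ b) (s * d) := by
    refine (IsWeightedHomogeneous.sum _ _ _ fun i hi => ?_).add (hX 1 b _ (by simp [w, d]; ring))
    have : i ≤ s := Nat.lt_succ_iff.1 (Finset.mem_range.1 hi)
    convert (hu.pow i).mul (hv.pow (s - i)) using 1
    simp only [smul_eq_mul, ← add_mul]
    congr 1; omega
  have hprod : (u - v) * (P + X 1 ^ b) = (X 0 ^ (a1 + a2) - X 2 ^ c2 * X 1 ^ b)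
      - (X 2 ^ (c1 + c2) - X 1 ^ b * X 0 ^ a1) := by
    rw [sub_mul_geom_sum_add, ha2, hc1]
    ring
  have hHG : (u - v) * (P + X 1 ^ b) ∈ I :=
    hprod ▸ sub_mem (Ideal.subset_span (by simp)) (Ideal.subset_span (by simp))
  have hzero : (u - v) * (P + X 1 ^ b) = 0 := by
    rcases hP.mem_or_mem hHG with h | h
    · rw [hlow _ _ (by nlinarith) (hu.sub hv) h, zero_mul]
    · rw [hlow _ _ le_rfl hPy h, mul_zero]
  have := congrArg (eval ![1, 0, 0]) (hprod ▸ hzero)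
  simp [hb.ne', hc2.ne'] at this

theorem stmt_13_general {k : Type*} [Field k]
    (a1 a2 b c1 c2 r : ℕ)
    (ha1 : 0 < a1) (hb : 0 < b) (hc2 : 0 < c2)
    (ha : a1 ≤ a2)
    (hslope : a2 * c2 ≤ a1 * c1)
    (hr : r = a2 / a1 + 1)
    (x y z F G H : MvPolynomial (Fin 3) k)
    (hx : x = X 0) (hy : y = X 1) (hz : z = X 2)
    (hF : F = y ^ (2 * b) - x ^ a2 * z ^ c1)
    (hG : G = z ^ (c1 + c2) - y ^ b * x ^ a1)
    (hH : H = x ^ (a1 + a2) - z ^ c2 * y ^ b)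
    (D : ℕ → MvPolynomial (Fin 3) k)
    (hD0 : D 0 = -(y ^ b))
    (hDrec : ∀ l, 1 ≤ l → l ≤ r →
      z ^ (c2 - ((l - 1) * c2 - c1)) * D l
        = x ^ ((l - 1) * a1 - a2) * (H * D (l - 1))
          - x ^ ((((l - 1) * a1 - a2) + a2) - (l - 1) * a1) * G ^ l) :
    ((r - 1) * a1 < a2 →
      ∀ l, 1 ≤ l → l ≤ r → D l - (-(y ^ b)) ^ (l + 1) ∈ Ideal.span {x}) ∧
    (a2 = (r - 1) * a1 →
      (Ideal.span {F, G, H} : Ideal (MvPolynomial (Fin 3) k)).IsPrime →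
      ∀ l, 1 ≤ l → l ≤ r → D l - (-(y ^ b)) ^ (l + 1) ∈ Ideal.span {z}) := by
  subst hx hy hz
  have hr1 : 1 ≤ r - 1 := by rw [hr, Nat.add_sub_cancel]; exact (Nat.one_le_div_iff ha1).2 ha
  have hra : (r - 1) * a1 ≤ a2 := by rw [hr, Nat.add_sub_cancel]; exact Nat.div_mul_le_self a2 a1
  have hna : ∀ n < r, n * a1 ≤ a2 := fun n hn => (Nat.mul_le_mul_right a1 (by omega)).trans hra
  have hnc : ∀ n < r, n * c2 ≤ c1 := fun n hn =>
    Nat.le_of_mul_le_mul_left (by nlinarith [hna n hn]) ha1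
  have hH' : ∀ n < r, H = X 0 ^ (a2 - n * a1) * (X 0 ^ a1) ^ (n + 1) - X 2 ^ c2 * X 1 ^ b := by
    intro n hn
    have := hna n hn
    rw [hH, ← pow_mul, ← pow_add, mul_add_one, mul_comm a1 n]
    congr 2
    omega
  have hrec : ∀ n < r, X 2 ^ c2 * D (n + 1) = H * D n - X 0 ^ (a2 - n * a1) * G ^ (n + 1) :=
    fun n hn => by
      simpa [Nat.sub_eq_zero_of_le (hna n hn), Nat.sub_eq_zero_of_le (hnc n hn)] using
        hDrec (n + 1) (by omega) hn
  refine ⟨fun hlt l _ hl => Ideal.mem_span_singleton.2 ?_,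
    fun heq hP l _ hl => Ideal.mem_span_singleton.2 ?_⟩
  · have hx : Prime (X 0 : MvPolynomial (Fin 3) k) := X_prime
    refine dvd_sub_neg_pow_of_prime hx
      (fun h => absurd (X_dvd_X.1 (hx.dvd_of_dvd_pow h)) (by decide))
      (fun n hn => dvd_pow_self _ ?_) hD0 hH' hrec l hl
    have := Nat.mul_le_mul_right a1 (show n ≤ r - 1 by omega)
    omega
  · obtain hlt | heq' := (hnc (r - 1) (by omega)).lt_or_eq
    · refine (dvd_pow_self _ ?_).trans
        (pow_dvd_sub_neg_pow (X_ne_zero 2) rfl (by rw [hG]; ring) hnc hD0 hH' hrec l hl)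
      have := Nat.mul_le_mul_right c2 hl
      have : r * c2 = (r - 1) * c2 + c2 := by rw [← add_one_mul, Nat.sub_add_cancel (by omega)]
      omega
    · subst hF hG hH
      exact absurd hP (not_isPrime_span_of_exponents_proportional ha1 hb hc2 hr1 heq heq'.symm)

theorem stmt_13 {k : Type*} [Field k]
    (a1 a2 b c1 c2 r : ℕ)
    (ha1 : 0 < a1) (hb : 0 < b) (hc2 : 0 < c2)
    (ha : a1 ≤ a2) (hc : c2 ≤ c1)
    (hslope : a2 * c2 ≤ a1 * c1)
    (hr : r = a2 / a1 + 1)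
    (x y z F G H : MvPolynomial (Fin 3) k)
    (hx : x = X 0) (hy : y = X 1) (hz : z = X 2)
    (hF : F = y ^ (2 * b) - x ^ a2 * z ^ c1)
    (hG : G = z ^ (c1 + c2) - y ^ b * x ^ a1)
    (hH : H = x ^ (a1 + a2) - z ^ c2 * y ^ b)
    (D : ℕ → MvPolynomial (Fin 3) k)
    (hD0 : D 0 = -(y ^ b))
    (hDrec : ∀ l, 1 ≤ l → l ≤ r →
      z ^ (c2 - ((l - 1) * c2 - c1)) * D l
        = x ^ ((l - 1) * a1 - a2) * (H * D (l - 1))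
          - x ^ ((((l - 1) * a1 - a2) + a2) - (l - 1) * a1) * G ^ l) :
    ((r - 1) * a1 < a2 →
      ∀ l, 1 ≤ l → l ≤ r → D l - (-(y ^ b)) ^ (l + 1) ∈ Ideal.span {x}) ∧
    (a2 = (r - 1) * a1 →
      (Ideal.span {F, G, H} : Ideal (MvPolynomial (Fin 3) k)).IsPrime →
      ∀ l, 1 ≤ l → l ≤ r → D l - (-(y ^ b)) ^ (l + 1) ∈ Ideal.span {z}) :=
  stmt_13_general a1 a2 b c1 c2 r ha1 hb hc2 ha hslope hr x y z F G H hx hy hz hF hG hH D hD0 hDrec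
end

section
/- With M of type 1', r = ⌊a2/a1⌋ + 1, and γ = max{0, r c2 - c1}: D_{r+1} is a well-defined polynomial and D_{r+1} ≡ - z^{(r+1)c1 + r c2 + γ} (mod x). -/
/-!
Write `Y = y ^ b`. For `j ≤ r` one has `D_j ≡ (-Y) ^ (j + 1) (mod z ^ (c1 + c2 - j c2))`: since
`G ≡ -Y x ^ a1 (mod z ^ (c1 + c2))`, the leading terms of `x ^ α_j H D_j` and `x ^ β_j G ^ (j + 1)`
cancel, which leaves `z ^ c2 x ^ α_j (-Y) ^ (j + 2)` plus multiples of `z ^ (c1 + c2 - j c2)` and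
`z ^ (c1 + c2)`; so the division by `z ^ (c2 - γ_j)` is exact, and for `j < r` (where `α_j = 0` and
`γ_j = 0` by the slope condition) the quotient again has the required shape.
At the last step `α_r > 0`, so modulo the prime `x` the recurrence reads
`z ^ (c2 - γ) D_(r+1) ≡ -z ^ ((c1 + c2)(r + 1))`, and `z` can be cancelled.
-/

open MvPolynomial

theorem exists_seq_of_forall_exists_step {α : Type*} (P : ℕ → α → Prop) (R : ℕ → α → α → Prop)
    {a : α} (ha : P 0 a) (step : ∀ j p, P j p → ∃ q, R j p q ∧ P (j + 1) q) :
    ∃ D : ℕ → α, D 0 = a ∧ ∀ j, P j (D j) ∧ R j (D j) (D (j + 1)) := by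
  let S : (j : ℕ) → {p // P j p} := fun j =>
    Nat.rec ⟨a, ha⟩ (fun j p => ⟨(step j p.1 p.2).choose, (step j p.1 p.2).choose_spec.2⟩) j
  exact ⟨fun j => (S j).1, rfl, fun j => ⟨(S j).2, (step j _ (S j).2).choose_spec.1⟩⟩

section Recurrence

variable {R : Type*} [CommRing R] {x Y z G : R} {a1 a2 c c1 c2 j : ℕ}

theorem recurrence_rhs_eq {P E S : R} {α β m : ℕ} (hP : P = (-Y) ^ (j + 1) + z ^ m * E)
    (hG : G ^ (j + 1) = (-(Y * x ^ a1)) ^ (j + 1) + z ^ c * S)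
    (hαβ : α + (a1 + a2) = β + (j + 1) * a1) :
    x ^ α * ((x ^ (a1 + a2) - z ^ c2 * Y) * P) - x ^ β * G ^ (j + 1)
      = z ^ c2 * (x ^ α * (-Y) ^ (j + 2)) + z ^ m * (x ^ α * (x ^ (a1 + a2) - z ^ c2 * Y) * E)
        - z ^ c * (x ^ β * S) := by
  have hx : x ^ (α + (a1 + a2)) = x ^ (β + (j + 1) * a1) := by rw [hαβ]
  rw [hP, hG]
  linear_combination (-Y) ^ (j + 1) * hx

theorem exists_recurrence_step {P : R} (hG : G = z ^ (c1 + c2) - Y * x ^ a1)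
    (hjc : j * c2 ≤ c1 + c2) (hP : z ^ (c1 + c2 - j * c2) ∣ P - (-Y) ^ (j + 1)) :
    ∃ Q, z ^ (c2 - (j * c2 - c1)) * Q
        = x ^ (j * a1 - a2) * ((x ^ (a1 + a2) - z ^ c2 * Y) * P)
          - x ^ (j * a1 - a2 + a2 - j * a1) * G ^ (j + 1) ∧
      (j * a1 ≤ a2 → j * c2 ≤ c1 → z ^ (c1 + c2 - (j + 1) * c2) ∣ Q - (-Y) ^ (j + 2)) := by
  obtain ⟨E, hE⟩ := hP
  obtain ⟨S, hS⟩ : z ^ (c1 + c2) ∣ G ^ (j + 1) - (-(Y * x ^ a1)) ^ (j + 1) := by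
    simpa [hG] using sub_dvd_pow_sub_pow G (-(Y * x ^ a1)) (j + 1)
  have key := recurrence_rhs_eq (a2 := a2) (c2 := c2) (eq_add_of_sub_eq' hE) (eq_add_of_sub_eq' hS)
    (α := j * a1 - a2) (β := j * a1 - a2 + a2 - j * a1) (by rw [add_one_mul]; omega)
  -- `e = min c2 m`, so `z ^ e` divides each of the three terms of `key`
  set e := c2 - (j * c2 - c1)
  set m := c1 + c2 - j * c2
  refine ⟨z ^ (m - e) * (x ^ (j * a1 - a2) * (x ^ (a1 + a2) - z ^ c2 * Y) * E)
      - z ^ (c1 + c2 - e) * (x ^ (j * a1 - a2 + a2 - j * a1) * S)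
      + z ^ (c2 - e) * (x ^ (j * a1 - a2) * (-Y) ^ (j + 2)), ?_, ?_⟩
  · rw [key, ← pow_mul_pow_sub z (show e ≤ c2 by omega), ← pow_mul_pow_sub z (show e ≤ m by omega),
      ← pow_mul_pow_sub z (show e ≤ c1 + c2 by omega)]
    ring
  · intro ha hc
    have he : e = c2 := by omega
    have hα : j * a1 - a2 = 0 := by omega
    simp only [he, hα, Nat.sub_self, pow_zero, one_mul, add_sub_cancel_right]
    exact dvd_sub (dvd_mul_of_dvd_left (pow_dvd_pow z (by rw [add_one_mul]; omega)) _)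
      (dvd_mul_of_dvd_left (pow_dvd_pow z (by rw [add_one_mul]; omega)) _)

theorem add_pow_mem_span_of_pow_mul_eq {D P : R} {e N n α : ℕ} (hx : (Ideal.span {x}).IsPrime)
    (hz : z ∉ Ideal.span {x}) (ha1 : 0 < a1) (hα : 0 < α) (hN : e + N = c * n)
    (hD : z ^ e * D = x ^ α * P - (z ^ c - Y * x ^ a1) ^ n) :
    D + z ^ N ∈ Ideal.span {x} := by
  have hxI : x ∈ Ideal.span {x} := Ideal.mem_span_singleton_self x
  have hmem : z ^ e * (D + z ^ N) ∈ Ideal.span {x} := by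
    have h : z ^ e * (D + z ^ N) = x ^ α * P + ((z ^ c) ^ n - (z ^ c - Y * x ^ a1) ^ n) := by
      rw [mul_add, hD, ← pow_add, hN, pow_mul]
      ring
    rw [h]
    refine add_mem (Ideal.mul_mem_right _ _ (Ideal.pow_mem_of_mem _ hxI _ hα)) ?_
    refine Ideal.mem_span_singleton.2 (dvd_trans ?_ (sub_dvd_pow_sub_pow _ _ n))
    rw [sub_sub_cancel]
    exact dvd_mul_of_dvd_right (dvd_pow_self x ha1.ne') Y
  exact (hx.mem_or_mem hmem).resolve_left fun h => hz (hx.mem_of_pow_mem e h)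

theorem exists_seq_recurrence {H : R} {r : ℕ} (hG : G = z ^ (c1 + c2) - Y * x ^ a1)
    (hH : H = x ^ (a1 + a2) - z ^ c2 * Y) (hra : r * a1 ≤ a2) (hrc : r * c2 ≤ c1) :
    ∃ D : ℕ → R, D 0 = -Y ∧ ∀ j ≤ r + 1, z ^ (c2 - (j * c2 - c1)) * D (j + 1)
      = x ^ (j * a1 - a2) * (H * D j) - x ^ (j * a1 - a2 + a2 - j * a1) * G ^ (j + 1) := by
  obtain ⟨D, hD0, hD⟩ := exists_seq_of_forall_exists_step
    (fun j p => j ≤ r + 1 → z ^ (c1 + c2 - j * c2) ∣ p - (-Y) ^ (j + 1))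
    (fun j p q => j ≤ r + 1 → z ^ (c2 - (j * c2 - c1)) * q
      = x ^ (j * a1 - a2) * (H * p) - x ^ (j * a1 - a2 + a2 - j * a1) * G ^ (j + 1))
    (a := -Y) (fun _ => by simp) fun j p hp => by
      by_cases hj : j ≤ r + 1
      · have hjc : j * c2 ≤ c1 + c2 := by
          have := Nat.mul_le_mul_right c2 hj
          rw [add_one_mul] at this; omega
        obtain ⟨Q, hQ, hQ'⟩ := exists_recurrence_step hG hjc (hp hj)
        refine ⟨Q, fun _ => hH ▸ hQ, fun _ => hQ' ?_ ?_⟩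
        · exact (Nat.mul_le_mul_right a1 (by omega : j ≤ r)).trans hra
        · exact (Nat.mul_le_mul_right c2 (by omega : j ≤ r)).trans hrc
      · exact ⟨0, fun h => absurd h hj, fun h => absurd (by omega) hj⟩
  exact ⟨D, hD0, fun j hj => (hD j).2 hj⟩

end Recurrence

theorem stmt_14_general {k : Type*} [Field k]
    (a1 a2 b c1 c2 r γ : ℕ)
    (ha1 : 0 < a1)
    (hslope : a2 * c2 ≤ a1 * c1)
    (hr : r = a2 / a1 + 1)
    (hγ : γ = r * c2 - c1)
    (x y z G H : MvPolynomial (Fin 3) k)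
    (hx : x = X 0) (hz : z = X 2)
    (hG : G = z ^ (c1 + c2) - y ^ b * x ^ a1)
    (hH : H = x ^ (a1 + a2) - z ^ c2 * y ^ b) :
    ∃ D : ℕ → MvPolynomial (Fin 3) k,
      D 0 = -(y ^ b) ∧
      (∀ l, 1 ≤ l → l ≤ r + 1 →
        z ^ (c2 - ((l - 1) * c2 - c1)) * D l
          = x ^ ((l - 1) * a1 - a2) * (H * D (l - 1))
            - x ^ ((((l - 1) * a1 - a2) + a2) - (l - 1) * a1) * G ^ l) ∧
      D (r + 1) + z ^ ((r + 1) * c1 + r * c2 + γ) ∈ Ideal.span {x} := by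
  obtain ⟨r, rfl⟩ : ∃ r', r = r' + 1 := ⟨_, hr⟩
  have hra : r * a1 ≤ a2 := by rw [Nat.succ_inj.1 hr]; exact Nat.div_mul_le_self a2 a1
  have ha2_lt : a2 < r * a1 + a1 := by rw [Nat.succ_inj.1 hr]; exact Nat.lt_div_mul_add ha1
  have hrc : r * c2 ≤ c1 := by
    refine Nat.le_of_mul_le_mul_left ?_ ha1
    calc a1 * (r * c2) = r * a1 * c2 := by ring
      _ ≤ a2 * c2 := Nat.mul_le_mul_right c2 hra
      _ ≤ a1 * c1 := hslope
  obtain ⟨D, hD0, hD⟩ := exists_seq_recurrence hG hH hra hrc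
  refine ⟨D, hD0, fun l hl1 hl2 => ?_, ?_⟩
  · obtain ⟨j, rfl⟩ : ∃ j, l = j + 1 := ⟨l - 1, by omega⟩
    simpa using hD j (by omega)
  · have hxI : (Ideal.span {x}).IsPrime := by
      rw [hx, Ideal.span_singleton_prime (X_ne_zero _)]; exact X_prime
    have hzI : z ∉ Ideal.span {x} := by
      rw [hx, hz, Ideal.mem_span_singleton, X_dvd_X]; decide
    have hlast := hD (r + 1) le_rfl
    rw [show (r + 1) * a1 - a2 + a2 - (r + 1) * a1 = 0 by rw [add_one_mul]; omega, pow_zero,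
      one_mul, hG] at hlast
    refine add_pow_mem_span_of_pow_mul_eq hxI hzI ha1 (by rw [add_one_mul]; omega) ?_ hlast
    -- `c2 - γ` plus the exponent in the claim is `(c1 + c2) * (r + 1)`
    have h1 : (r + 1) * c2 = r * c2 + c2 := by ring
    have h2 : (r + 1 + 1) * c1 = r * c1 + 2 * c1 := by ring
    have h3 : (c1 + c2) * (r + 1 + 1) = r * c1 + r * c2 + 2 * c1 + 2 * c2 := by ring
    omega

theorem stmt_14 {k : Type*} [Field k]
    (a1 a2 b c1 c2 r γ : ℕ)
    (ha1 : 0 < a1) (hb : 0 < b) (hc2 : 0 < c2)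
    (ha : a1 ≤ a2) (hc : c2 ≤ c1)
    (hslope : a2 * c2 ≤ a1 * c1)
    (hr : r = a2 / a1 + 1)
    (hγ : γ = r * c2 - c1)
    (x y z F G H : MvPolynomial (Fin 3) k)
    (hx : x = X 0) (hy : y = X 1) (hz : z = X 2)
    (hF : F = y ^ (2 * b) - x ^ a2 * z ^ c1)
    (hG : G = z ^ (c1 + c2) - y ^ b * x ^ a1)
    (hH : H = x ^ (a1 + a2) - z ^ c2 * y ^ b) :
    ∃ D : ℕ → MvPolynomial (Fin 3) k,
      D 0 = -(y ^ b) ∧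
      (∀ l, 1 ≤ l → l ≤ r + 1 →
        z ^ (c2 - ((l - 1) * c2 - c1)) * D l
          = x ^ ((l - 1) * a1 - a2) * (H * D (l - 1))
            - x ^ ((((l - 1) * a1 - a2) + a2) - (l - 1) * a1) * G ^ l) ∧
      D (r + 1) + z ^ ((r + 1) * c1 + r * c2 + γ) ∈ Ideal.span {x} :=
  stmt_14_general a1 a2 b c1 c2 r γ ha1 hslope hr hγ x y z G H hx hz hG hH
end

section
/- Let M be of type 1'. For 1 ≤ l ≤ r+1 (r = ⌊a2/a1⌋ + 1), the two expressions for D_l agree: x^{-α_l} z^{-γ_l} D_l = z^{-c2}(H D_{l-1} - x^{a2-(l-1)a1} G^l) = x^{-a1}(G D_{l-1} - z^{c1-(l-1)c2} H^l). Equivalently, x^{a1}(H D_{l-1} - x^{a2-(l-1)a1} G^l) = z^{c2}(G D_{l-1} - z^{c1-(l-1)c2} H^l). -/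
open MvPolynomial

theorem stmt_15 {k : Type*} [Field k]
    (a1 a2 b c1 c2 r : ℕ)
    (ha1 : 0 < a1) (hb : 0 < b) (hc2 : 0 < c2)
    (ha : a1 ≤ a2) (hc : c2 ≤ c1)
    (hslope : a2 * c2 ≤ a1 * c1)
    (hr : r = a2 / a1 + 1)
    (x y z F G H : MvPolynomial (Fin 3) k)
    (hx : x = X 0) (hy : y = X 1) (hz : z = X 2)
    (hF : F = y ^ (2 * b) - x ^ a2 * z ^ c1)
    (hG : G = z ^ (c1 + c2) - y ^ b * x ^ a1)
    (hH : H = x ^ (a1 + a2) - z ^ c2 * y ^ b)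
    (D : ℕ → MvPolynomial (Fin 3) k)
    (hD0 : D 0 = -(y ^ b))
    (hDrec : ∀ l, 1 ≤ l → l ≤ r + 1 →
      z ^ (c2 - ((l - 1) * c2 - c1)) * D l
        = x ^ ((l - 1) * a1 - a2) * (H * D (l - 1))
          - x ^ ((((l - 1) * a1 - a2) + a2) - (l - 1) * a1) * G ^ l) :
    ∀ l, 1 ≤ l → l ≤ r + 1 →
      (x ^ a1 *
          (x ^ ((l - 1) * a1 - a2) * z ^ ((l - 1) * c2 - c1) * (H * D (l - 1))
            - x ^ ((((l - 1) * a1 - a2) + a2) - (l - 1) * a1)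
              * z ^ ((l - 1) * c2 - c1) * G ^ l)
        = z ^ c2 *
          (x ^ ((l - 1) * a1 - a2) * z ^ ((l - 1) * c2 - c1) * (G * D (l - 1))
            - x ^ ((l - 1) * a1 - a2)
              * z ^ ((((l - 1) * c2 - c1) + c1) - (l - 1) * c2) * H ^ l)) ∧
      (x ^ a1 * D l
        = x ^ ((l - 1) * a1 - a2) * z ^ ((l - 1) * c2 - c1) * (G * D (l - 1))
          - x ^ ((l - 1) * a1 - a2)
            * z ^ ((((l - 1) * c2 - c1) + c1) - (l - 1) * c2) * H ^ l) := by
  have hzne : z ^ c2 ≠ 0 := by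
    rw [hz]; exact pow_ne_zero _ (X_ne_zero _)
  have key2 : ∀ t : ℕ, t ≤ a2 / a1 → t * c2 ≤ c1 := by
    intro t ht
    have h1 : t * a1 ≤ a2 := (Nat.le_div_iff_mul_le ha1).mp ht
    have h2 : t * c2 * a1 ≤ c1 * a1 := by
      calc t * c2 * a1 = t * a1 * c2 := by ring
        _ ≤ a2 * c2 := Nat.mul_le_mul_right _ h1
        _ ≤ a1 * c1 := hslope
        _ = c1 * a1 := by ring
    exact Nat.le_of_mul_le_mul_right h2 ha1
  intro l hl1
  induction l, hl1 using Nat.le_induction with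
  | base =>
    intro _
    have hrec := hDrec 1 le_rfl (by omega)
    simp only [Nat.sub_self, Nat.zero_mul, Nat.zero_sub, Nat.zero_add, Nat.sub_zero,
      pow_zero, one_mul, pow_one] at hrec ⊢
    have hid : x ^ a1 * (H * D 0 - x ^ a2 * G) = z ^ c2 * (G * D 0 - z ^ c1 * H) := by
      rw [hD0, hG, hH]; ring
    refine ⟨?_, ?_⟩
    · rw [hD0, hG, hH]; ring
    · apply mul_left_cancel₀ hzne
      linear_combination x ^ a1 * hrec + hid
  | succ n hn ih =>
    intro hle
    obtain ⟨t, rfl⟩ : ∃ t, n = t + 1 := ⟨n - 1, by omega⟩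
    have hta : t ≤ a2 / a1 := by omega
    have htA : t * a1 ≤ a2 := (Nat.le_div_iff_mul_le ha1).mp hta
    have htC : t * c2 ≤ c1 := key2 t hta
    obtain ⟨h1, h2⟩ := ih (by omega)
    have hrec := hDrec (t + 1) (by omega) (by omega)
    have hrec2 := hDrec (t + 1 + 1) (by omega) (by omega)
    clear h1
    simp only [Nat.add_sub_cancel] at h2 hrec hrec2 ⊢
    rw [Nat.sub_eq_zero_of_le htA, Nat.sub_eq_zero_of_le htC] at h2 hrec
    simp only [Nat.sub_zero, Nat.zero_add, pow_zero, one_mul] at h2 hrec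
    have eB : (((t + 1) * a1 - a2) + a2) - (t + 1) * a1 = a2 - (t + 1) * a1 := by omega
    have eQ : (((t + 1) * c2 - c1) + c1) - (t + 1) * c2 = c1 - (t + 1) * c2 := by omega
    rw [eB] at hrec2 ⊢
    rw [eQ]
    have em1 : (t + 1) * a1 = t * a1 + a1 := by ring
    have em2 : (t + 1) * c2 = t * c2 + c2 := by ring
    have hx1 : x ^ ((t + 1) * a1 - a2) * x ^ (a2 - t * a1)
        = x ^ a1 * x ^ (a2 - (t + 1) * a1) := by
      rw [← pow_add, ← pow_add]; congr 1; rw [em1]; omega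
    have hz1 : z ^ ((t + 1) * c2 - c1) * z ^ (c1 - t * c2)
        = z ^ c2 * z ^ (c1 - (t + 1) * c2) := by
      rw [← pow_add, ← pow_add]; congr 1; rw [em2]; omega
    have hzpow : z ^ ((t + 1) * c2 - c1) * z ^ (c2 - ((t + 1) * c2 - c1)) = z ^ c2 := by
      rw [← pow_add]; congr 1; rw [em2]; omega
    have g1 : x ^ a1 *
          (x ^ ((t + 1) * a1 - a2) * z ^ ((t + 1) * c2 - c1) * (H * D (t + 1))
            - x ^ (a2 - (t + 1) * a1) * z ^ ((t + 1) * c2 - c1) * G ^ (t + 1 + 1))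
        = z ^ c2 *
          (x ^ ((t + 1) * a1 - a2) * z ^ ((t + 1) * c2 - c1) * (G * D (t + 1))
            - x ^ ((t + 1) * a1 - a2) * z ^ (c1 - (t + 1) * c2) * H ^ (t + 1 + 1)) := by
      linear_combination
        (x ^ ((t + 1) * a1 - a2) * z ^ ((t + 1) * c2 - c1) * H) * h2
        - (x ^ ((t + 1) * a1 - a2) * z ^ ((t + 1) * c2 - c1) * G) * hrec
        + (z ^ ((t + 1) * c2 - c1) * G ^ (t + 1 + 1)) * hx1
        - (x ^ ((t + 1) * a1 - a2) * H ^ (t + 1 + 1)) * hz1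
    refine ⟨g1, ?_⟩
    apply mul_left_cancel₀ hzne
    linear_combination (x ^ a1 * z ^ ((t + 1) * c2 - c1)) * hrec2 + g1
      - (x ^ a1 * D (t + 1 + 1)) * hzpow
end

section
/- Let M be of type 1' and P = (F, G, H). For 1 ≤ l ≤ r+1, both x^{(l-1)a1} D_l ∈ P^l and z^{(l-1)c2} D_l ∈ P^l. -/
open MvPolynomial

theorem stmt_16 {k : Type*} [Field k]
    (a1 a2 b c1 c2 r : ℕ)
    (ha1 : 0 < a1) (hb : 0 < b) (hc2 : 0 < c2)
    (ha : a1 ≤ a2) (hc : c2 ≤ c1)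
    (hslope : a2 * c2 ≤ a1 * c1)
    (hr : r = a2 / a1 + 1)
    (x y z F G H : MvPolynomial (Fin 3) k)
    (hx : x = X 0) (hy : y = X 1) (hz : z = X 2)
    (hF : F = y ^ (2 * b) - x ^ a2 * z ^ c1)
    (hG : G = z ^ (c1 + c2) - y ^ b * x ^ a1)
    (hH : H = x ^ (a1 + a2) - z ^ c2 * y ^ b)
    (D : ℕ → MvPolynomial (Fin 3) k)
    (hD0 : D 0 = -(y ^ b))
    (hDrec : ∀ l, 1 ≤ l → l ≤ r + 1 →
      z ^ (c2 - ((l - 1) * c2 - c1)) * D l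
        = x ^ ((l - 1) * a1 - a2) * (H * D (l - 1))
          - x ^ ((((l - 1) * a1 - a2) + a2) - (l - 1) * a1) * G ^ l) :
    ∀ l, 1 ≤ l → l ≤ r + 1 →
      x ^ ((l - 1) * a1) * D l ∈ (Ideal.span {F, G, H}) ^ l ∧
      z ^ ((l - 1) * c2) * D l ∈ (Ideal.span {F, G, H}) ^ l := by
  have hzne : z ≠ 0 := by rw [hz]; exact X_ne_zero 2
  -- basic arithmetic facts
  have hq1 : (r - 1) * a1 ≤ a2 := by
    rw [hr]; simpa using Nat.div_mul_le_self a2 a1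
  have hq2 : (r - 1) * c2 ≤ c1 := by
    have h : (r - 1) * c2 * a1 ≤ c1 * a1 := by
      calc (r - 1) * c2 * a1 = ((r - 1) * a1) * c2 := by ring
        _ ≤ a2 * c2 := Nat.mul_le_mul_right _ hq1
        _ ≤ a1 * c1 := hslope
        _ = c1 * a1 := by ring
    exact Nat.le_of_mul_le_mul_right h ha1
  have hr1 : 1 ≤ r := by rw [hr]; exact Nat.succ_le_succ (Nat.zero_le _)
  -- D 1 = F
  have hD1F : D 1 = F := by
    have E := hDrec 1 le_rfl (by omega)
    rw [show (1:ℕ) - 1 = 0 by omega] at E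
    rw [show 0 * c2 - c1 = 0 by omega, show 0 * a1 - a2 = 0 by omega,
      show c2 - 0 = c2 by omega, show 0 + a2 - 0 * a1 = a2 by omega,
      pow_zero, one_mul, pow_one] at E
    refine mul_left_cancel₀ (pow_ne_zero c2 hzne) ?_
    rw [E, hD0, hF, hG, hH]
    ring
  -- the mirrored recurrence
  have Mir : ∀ m : ℕ, m ≤ r →
      x ^ a1 * D (m + 1)
        = x ^ (m * a1 - a2) * (z ^ (m * c2 - c1) * (G * D m)
            - z ^ ((m * c2 - c1 + c1) - m * c2) * H ^ (m + 1)) := by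
    intro m
    induction m with
    | zero =>
      intro _
      rw [show 0 * a1 - a2 = 0 by omega, show 0 * c2 - c1 = 0 by omega,
        show 0 + c1 - 0 * c2 = c1 by omega, pow_zero, pow_zero, one_mul, one_mul,
        pow_one, hD1F, hD0, hF, hG, hH]
      ring
    | succ n ih =>
      intro hmr
      have hna : n * a1 ≤ a2 := le_trans (Nat.mul_le_mul_right _ (by omega : n ≤ r - 1)) hq1
      have hnc : n * c2 ≤ c1 := le_trans (Nat.mul_le_mul_right _ (by omega : n ≤ r - 1)) hq2
      have E1 := hDrec (n + 1) (by omega) (by omega)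
      simp only [Nat.add_sub_cancel] at E1
      rw [show c2 - (n * c2 - c1) = c2 by omega, show n * a1 - a2 = 0 by omega,
        show 0 + a2 - n * a1 = a2 - n * a1 by omega, pow_zero, one_mul] at E1
      have E2 := ih (by omega)
      rw [show n * a1 - a2 = 0 by omega, show n * c2 - c1 = 0 by omega,
        show 0 + c1 - n * c2 = c1 - n * c2 by omega, pow_zero, pow_zero,
        one_mul, one_mul] at E2
      have REC := hDrec (n + 1 + 1) (by omega) (by omega)
      simp only [Nat.add_sub_cancel] at REC
      simp only [add_mul, one_mul] at REC ⊢
      refine mul_left_cancel₀ (pow_ne_zero (c2 - (n * c2 + c2 - c1)) hzne) ?_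
      rcases le_total (n * c2 + c2) c1 with hg | hg
      · -- low regime in z
        rw [show n * c2 + c2 - c1 = 0 by omega] at REC ⊢
        rw [Nat.sub_zero] at REC ⊢
        rw [show 0 + c1 - (n * c2 + c2) = c1 - (n * c2 + c2) by omega]
        rw [show (z : MvPolynomial (Fin 3) k) ^ (c1 - n * c2)
            = z ^ (c1 - (n * c2 + c2)) * z ^ c2 by
          rw [← pow_add]; congr 1; omega] at E2
        rcases le_total (n * a1 + a1) a2 with ha' | ha'
        · rw [show n * a1 + a1 - a2 = 0 by omega] at REC ⊢
          rw [show 0 + a2 - (n * a1 + a1) = a2 - (n * a1 + a1) by omega] at REC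
          rw [show (x : MvPolynomial (Fin 3) k) ^ (a2 - n * a1)
              = x ^ (a2 - (n * a1 + a1)) * x ^ a1 by
            rw [← pow_add]; congr 1; omega] at E1
          linear_combination (x ^ a1) * REC + H * E2 - G * E1
        · rw [show n * a1 + a1 - a2 + a2 - (n * a1 + a1) = 0 by omega] at REC
          rw [show (x : MvPolynomial (Fin 3) k) ^ a1
              = x ^ (n * a1 + a1 - a2) * x ^ (a2 - n * a1) by
            rw [← pow_add]; congr 1; omega] at E2 ⊢
          linear_combination (x ^ (n * a1 + a1 - a2) * x ^ (a2 - n * a1)) * REC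
            + (x ^ (n * a1 + a1 - a2) * H) * E2 - (x ^ (n * a1 + a1 - a2) * G) * E1
      · -- high regime in z
        rw [show n * c2 + c2 - c1 + c1 - (n * c2 + c2) = 0 by omega]
        rw [show c2 - (n * c2 + c2 - c1) = c1 - n * c2 by omega] at REC ⊢
        rw [show (z : MvPolynomial (Fin 3) k) ^ c2
            = z ^ (c1 - n * c2) * z ^ (n * c2 + c2 - c1) by
          rw [← pow_add]; congr 1; omega] at E1
        rcases le_total (n * a1 + a1) a2 with ha' | ha'
        · rw [show n * a1 + a1 - a2 = 0 by omega] at REC ⊢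
          rw [show 0 + a2 - (n * a1 + a1) = a2 - (n * a1 + a1) by omega] at REC
          rw [show (x : MvPolynomial (Fin 3) k) ^ (a2 - n * a1)
              = x ^ (a2 - (n * a1 + a1)) * x ^ a1 by
            rw [← pow_add]; congr 1; omega] at E1
          linear_combination (x ^ a1) * REC + H * E2 - G * E1
        · rw [show n * a1 + a1 - a2 + a2 - (n * a1 + a1) = 0 by omega] at REC
          rw [show (x : MvPolynomial (Fin 3) k) ^ a1
              = x ^ (n * a1 + a1 - a2) * x ^ (a2 - n * a1) by
            rw [← pow_add]; congr 1; omega] at E2 ⊢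
          linear_combination (x ^ (n * a1 + a1 - a2) * x ^ (a2 - n * a1)) * REC
            + (x ^ (n * a1 + a1 - a2) * H) * E2 - (x ^ (n * a1 + a1 - a2) * G) * E1
  -- membership generators
  set P : Ideal (MvPolynomial (Fin 3) k) := Ideal.span {F, G, H} with hP
  have hFm : F ∈ P := Ideal.subset_span (by simp)
  have hGm : G ∈ P := Ideal.subset_span (by simp)
  have hHm : H ∈ P := Ideal.subset_span (by simp)
  have claim : ∀ m : ℕ, m ≤ r →
      x ^ (m * a1) * D (m + 1) ∈ P ^ (m + 1) ∧
      z ^ (m * c2) * D (m + 1) ∈ P ^ (m + 1) := by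
    intro m
    induction m with
    | zero =>
      intro _
      simp only [Nat.zero_mul, pow_zero, one_mul, Nat.zero_add, pow_one, hD1F]
      exact ⟨hFm, hFm⟩
    | succ n ih =>
      intro hmr
      have ihn := ih (by omega)
      have hnc : n * c2 ≤ c1 := le_trans (Nat.mul_le_mul_right _ (by omega : n ≤ r - 1)) hq2
      have REC := hDrec (n + 1 + 1) (by omega) (by omega)
      simp only [Nat.add_sub_cancel] at REC
      have MIR := Mir (n + 1) (by omega)
      simp only [add_mul, one_mul] at REC MIR ⊢
      set g : ℕ := n * c2 + c2 - c1 with hgdef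
      constructor
      · have key : x ^ (n * a1 + a1) * D (n + 1 + 1)
            = (z ^ g * x ^ (n * a1 + a1 - a2))
                * ((x ^ (n * a1) * D (n + 1)) * G)
              - (x ^ (n * a1) * x ^ (n * a1 + a1 - a2) * z ^ (g + c1 - (n * c2 + c2)))
                  * H ^ (n + 1 + 1) := by
          rw [pow_add]
          linear_combination (x ^ (n * a1)) * MIR
        rw [key]
        refine sub_mem (Ideal.mul_mem_left _ _ ?_) (Ideal.mul_mem_left _ _ ?_)
        · rw [pow_succ]; exact Ideal.mul_mem_mul ihn.1 hGm
        · exact Ideal.pow_mem_pow hHm _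
      · have key : z ^ (n * c2 + c2) * D (n + 1 + 1)
            = (z ^ g * x ^ (n * a1 + a1 - a2))
                * ((z ^ (n * c2) * D (n + 1)) * H)
              - (z ^ (n * c2 + g) * x ^ (n * a1 + a1 - a2 + a2 - (n * a1 + a1)))
                  * G ^ (n + 1 + 1) := by
          rw [show n * c2 + c2 = (n * c2 + g) + (c2 - g) by omega, pow_add, mul_assoc,
            REC]
          ring
        rw [key]
        refine sub_mem (Ideal.mul_mem_left _ _ ?_) (Ideal.mul_mem_left _ _ ?_)
        · rw [pow_succ]; exact Ideal.mul_mem_mul ihn.2 hHm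
        · exact Ideal.pow_mem_pow hGm _
  intro l hl1 hl2
  obtain ⟨m, rfl⟩ : ∃ m, l = m + 1 := ⟨l - 1, by omega⟩
  have := claim m (by omega)
  simpa [Nat.add_sub_cancel] using this
end

section
/- Let M be of type 1', P = (F,G,H), m = (x,y,z), and r = ⌊a2/a1⌋ + 1. For 0 ≤ l ≤ r+1, D_l ∈ m^{δ_l} P^{⌊(l+1)/2⌋}, where δ_l = 1 if l is even or l = r+1, and δ_l = 0 otherwise. -/
open MvPolynomial

theorem stmt_17 {k : Type*} [Field k]
    (a1 a2 b c1 c2 r : ℕ)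
    (ha1 : 0 < a1) (hb : 0 < b) (hc2 : 0 < c2)
    (ha : a1 ≤ a2) (hc : c2 ≤ c1)
    (hslope : a2 * c2 ≤ a1 * c1)
    (hr : r = a2 / a1 + 1)
    (x y z F G H : MvPolynomial (Fin 3) k)
    (hx : x = X 0) (hy : y = X 1) (hz : z = X 2)
    (hF : F = y ^ (2 * b) - x ^ a2 * z ^ c1)
    (hG : G = z ^ (c1 + c2) - y ^ b * x ^ a1)
    (hH : H = x ^ (a1 + a2) - z ^ c2 * y ^ b)
    (hprime : (Ideal.span {F, G, H} : Ideal (MvPolynomial (Fin 3) k)).IsPrime)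
    (D : ℕ → MvPolynomial (Fin 3) k)
    (hD0 : D 0 = -(y ^ b))
    (hDrec : ∀ l, 1 ≤ l → l ≤ r + 1 →
      z ^ (c2 - ((l - 1) * c2 - c1)) * D l
        = x ^ ((l - 1) * a1 - a2) * (H * D (l - 1))
          - x ^ ((((l - 1) * a1 - a2) + a2) - (l - 1) * a1) * G ^ l) :
    ∀ l, l ≤ r + 1 →
      D l ∈ (Ideal.span {x, y, z}) ^ (if l % 2 = 0 ∨ l = r + 1 then 1 else 0)
              * (Ideal.span {F, G, H}) ^ ((l + 1) / 2) := by
  -- abbreviations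
  set P : Ideal (MvPolynomial (Fin 3) k) := Ideal.span {F, G, H} with hPdef
  set J : Ideal (MvPolynomial (Fin 3) k) := Ideal.span {x, y, z} with hJdef
  obtain ⟨q, hq⟩ : ∃ q, a2 / a1 = q := ⟨_, rfl⟩
  rw [hq] at hr
  subst hr
  have hzne : z ≠ 0 := by
    rw [hz]
    exact MvPolynomial.X_ne_zero _
  have hq1 : 1 ≤ q := by
    have h := (Nat.one_le_div_iff ha1).2 ha
    rwa [hq] at h
  -- basic arithmetic facts
  have hqa : q * a1 ≤ a2 := by rw [← hq]; exact Nat.div_mul_le_self a2 a1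
  have hqc : q * c2 ≤ c1 := by
    have h1 : a1 * (q * c2) ≤ a1 * c1 := by
      calc a1 * (q * c2) = (q * a1) * c2 := by ring
        _ ≤ a2 * c2 := mul_le_mul_left hqa c2
        _ ≤ a1 * c1 := hslope
    exact Nat.le_of_mul_le_mul_left h1 ha1
  have hlt : a2 < q * a1 + a1 := by
    have h5 := Nat.div_add_mod a2 a1
    have h6 := Nat.mod_lt a2 ha1
    rw [hq] at h5
    have hcm : q * a1 = a1 * q := Nat.mul_comm _ _
    rw [hcm]
    generalize a1 * q = B at h5 ⊢
    generalize a2 % a1 = m at h5 h6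
    omega
  have hexps : ∀ n, n ≤ q → n * a1 ≤ a2 ∧ n * c2 ≤ c1 := by
    intro n hn
    exact ⟨le_trans (mul_le_mul_left hn a1) hqa,
           le_trans (mul_le_mul_left hn c2) hqc⟩
  -- membership basics
  have hxJ : x ∈ J := Ideal.subset_span (by simp)
  have hyJ : y ∈ J := Ideal.subset_span (by simp)
  have hzJ : z ∈ J := Ideal.subset_span (by simp)
  have hFP : F ∈ P := Ideal.subset_span (by simp)
  have hGP : G ∈ P := Ideal.subset_span (by simp)
  have hHP : H ∈ P := Ideal.subset_span (by simp)
  have hpowmem : ∀ (I : Ideal (MvPolynomial (Fin 3) k)) (p : MvPolynomial (Fin 3) k)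
      (n : ℕ), p ∈ I → 1 ≤ n → p ^ n ∈ I := by
    intro I p n hp hn
    obtain ⟨m, rfl⟩ : ∃ m, n = m + 1 := ⟨n - 1, by omega⟩
    rw [pow_succ]
    exact Ideal.mul_mem_left _ _ hp
  have Hdown : ∀ (p : MvPolynomial (Fin 3) k) (N M : ℕ), p ∈ P ^ N → M ≤ N → p ∈ P ^ M :=
    fun p N M h hMN => Ideal.pow_le_pow_right hMN h
  have HJdown : ∀ (p : MvPolynomial (Fin 3) k) (N M : ℕ), p ∈ J * P ^ N → M ≤ N →
      p ∈ J * P ^ M :=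
    fun p N M h hMN => Ideal.mul_mono le_rfl (Ideal.pow_le_pow_right hMN) h
  have Hmul : ∀ (p p' : MvPolynomial (Fin 3) k) (i j N : ℕ), i + j = N →
      p ∈ P ^ i → p' ∈ P ^ j → p * p' ∈ P ^ N := by
    intro p p' i j N hN hp hp'
    subst hN
    rw [pow_add]
    exact Ideal.mul_mem_mul hp hp'
  have hFP1 : F ∈ P ^ 1 := by rwa [pow_one]
  have hGP1 : G ∈ P ^ 1 := by rwa [pow_one]
  have hHP1 : H ∈ P ^ 1 := by rwa [pow_one]
  -- the auxiliary family C
  set Cc : ℕ → MvPolynomial (Fin 3) k := fun n =>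
    ∑ t ∈ Finset.range (n + 1), x ^ (t * a1) * z ^ ((n - t) * c2) * G ^ (n - t) * H ^ t
    with hCcdef
  have hCc : ∀ n, Cc n =
      ∑ t ∈ Finset.range (n + 1), x ^ (t * a1) * z ^ ((n - t) * c2) * G ^ (n - t) * H ^ t :=
    fun n => rfl
  have hCc0 : Cc 0 = 1 := by simp [hCc]
  have recB : ∀ n, Cc (n + 1) = x ^ a1 * H * Cc n + z ^ ((n + 1) * c2) * G ^ (n + 1) := by
    intro n
    rw [hCc, hCc, Finset.sum_range_succ']
    have h1 : ∀ t, x ^ ((t + 1) * a1) * z ^ ((n + 1 - (t + 1)) * c2) * G ^ (n + 1 - (t + 1))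
          * H ^ (t + 1)
        = x ^ a1 * H * (x ^ (t * a1) * z ^ ((n - t) * c2) * G ^ (n - t) * H ^ t) := by
      intro t
      have h2 : n + 1 - (t + 1) = n - t := by omega
      rw [h2, add_mul, one_mul, pow_add, pow_succ]
      ring
    rw [Finset.sum_congr rfl fun t _ => h1 t, ← Finset.mul_sum]
    simp only [Nat.zero_mul, pow_zero, one_mul, Nat.sub_zero, mul_one]
  have hCc1 : Cc 1 = x ^ a1 * H + z ^ (1 * c2) * G ^ 1 := by
    rw [recB 0, hCc0, mul_one]
  have CmemP : ∀ n, Cc n ∈ P ^ n := by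
    intro n
    induction n with
    | zero => rw [hCc0]; simp
    | succ m ih =>
      rw [recB m]
      refine add_mem ?_ ?_
      · rw [mul_assoc]
        exact Ideal.mul_mem_left _ _ (Hmul _ _ 1 m _ (by omega) hHP1 ih)
      · exact Ideal.mul_mem_left _ _ (Ideal.pow_mem_pow hGP _)
  have CmemJP : ∀ n, 1 ≤ n → Cc n ∈ J * P ^ n := by
    intro n hn
    obtain ⟨m, rfl⟩ : ∃ m, n = m + 1 := ⟨n - 1, by omega⟩
    rw [recB m]
    refine add_mem ?_ ?_
    · rw [mul_assoc]
      exact Ideal.mul_mem_mul (hpowmem J x a1 hxJ ha1)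
        (Hmul _ _ 1 m _ (by omega) hHP1 (CmemP m))
    · exact Ideal.mul_mem_mul (hpowmem J z _ hzJ (Nat.mul_pos (Nat.succ_pos m) hc2))
        (Ideal.pow_mem_pow hGP _)
  -- the recursion, cleaned up, for indices 1..q+1
  have hrec' : ∀ n, n ≤ q → ∀ e, a2 = n * a1 + e →
      z ^ c2 * D (n + 1) = H * D n - x ^ e * G ^ (n + 1) := by
    intro n hn e he
    have h := hDrec (n + 1) (by omega) (by omega)
    have hna : n * a1 ≤ a2 := (hexps n hn).1
    have hnc : n * c2 ≤ c1 := (hexps n hn).2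
    have e1 : n + 1 - 1 = n := rfl
    rw [e1] at h
    rw [Nat.sub_eq_zero_of_le hna, Nat.sub_eq_zero_of_le hnc] at h
    have e2 : 0 + a2 - n * a1 = e := by
      rw [zero_add, he, Nat.add_sub_cancel_left]
    rw [e2, Nat.sub_zero, pow_zero, one_mul] at h
    exact h
  -- main identities K1 and K2
  have main12 : ∀ n, n ≤ q → ∀ e g, a2 = n * a1 + e → c1 = n * c2 + g →
      (x ^ (a1 + a2) * D n = x ^ e * G ^ (n + 1) - x ^ e * z ^ (g + c2) * Cc n)
      ∧ (D (n + 1) = -(y ^ b * D n) - x ^ e * z ^ g * Cc n) := by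
    intro n
    induction n with
    | zero =>
      intro _ e g he hg
      have he0 : a2 = e := by omega
      have hg0 : c1 = g := by omega
      constructor
      · rw [hD0, hCc0, hG, he0, hg0]
        ring
      · have h := hrec' 0 (by omega) e (by omega)
        refine mul_left_cancel₀ (pow_ne_zero c2 hzne) ?_
        rw [h, hD0, hCc0, hH, hG, hg0, he0]
        ring
    | succ w ih =>
      intro hw e g he hg
      have he' : a2 = w * a1 + (e + a1) := by rw [he]; ring
      have hg' : c1 = w * c2 + (g + c2) := by rw [hg]; ring
      obtain ⟨IH1, IH2⟩ := ih (by omega) (e + a1) (g + c2) he' hg'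
      have hG2 : G = z ^ ((w + 1) * c2 + g + c2) - y ^ b * x ^ a1 := by
        rw [hG, hg]
      have K1 : x ^ (a1 + a2) * D (w + 1)
          = x ^ e * G ^ (w + 2) - x ^ e * z ^ (g + c2) * Cc (w + 1) := by
        linear_combination (x ^ (a1 + a2)) * IH2 + (-(y ^ b)) * IH1
          + (x ^ e * z ^ (g + c2)) * (recB w)
          + (x ^ (e + a1) * z ^ (g + c2) * Cc w) * hH
          + (-(x ^ e * G ^ (w + 1))) * hG2
      refine ⟨K1, ?_⟩
      have h := hrec' (w + 1) (by omega) e he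
      refine mul_left_cancel₀ (pow_ne_zero c2 hzne) ?_
      rw [h]
      linear_combination (D (w + 1)) * hH + K1
  have hD1 : D 1 = F := by
    have h : D 1 = -(y ^ b * D 0) - x ^ a2 * z ^ c1 * Cc 0 :=
      (main12 0 (by omega) a2 c1 (by omega) (by omega)).2
    rw [h, hD0, hCc0, hF]
    ring
  -- identity K3
  have main3 : ∀ w, w + 1 ≤ q → ∀ e g, a2 = (w + 1) * a1 + e → c1 = (w + 1) * c2 + g →
      z ^ ((w + 1) * c2) * D (w + 2) = F * H ^ (w + 1) - x ^ e * G ^ 2 * Cc w := by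
    intro w
    induction w with
    | zero =>
      intro hw e g he hg
      have h := hrec' 1 (by omega) e (by rw [he])
      linear_combination h + H * hD1 + (x ^ e * G ^ 2) * hCc0
    | succ v ih =>
      intro hw e g he hg
      have he' : a2 = (v + 1) * a1 + (e + a1) := by rw [he]; ring
      have hg' : c1 = (v + 1) * c2 + (g + c2) := by rw [hg]; ring
      have IH := ih (by omega) (e + a1) (g + c2) he' hg'
      have h6 := hrec' (v + 2) (by omega) e (by rw [he])
      linear_combination (z ^ ((v + 1) * c2)) * h6 + H * IH + (x ^ e * G ^ 2) * (recB v)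
  -- membership statements
  have hmem : ∀ n, n ≤ q →
      ((n + 1) % 2 = 1 → D (n + 1) ∈ P ^ ((n + 2) / 2))
      ∧ ((n + 1) % 2 = 0 → D (n + 1) ∈ J * P ^ ((n + 1) / 2)
          ∧ y ^ b * D (n + 1) ∈ P ^ ((n + 1) / 2 + 1)) := by
    intro n
    induction n with
    | zero =>
      intro _
      constructor
      · intro _
        have h2 : (0 + 2) / 2 = 1 := rfl
        rw [h2, pow_one]
        show D 1 ∈ P
        rw [hD1]
        exact hFP
      · intro h2
        exact absurd h2 (by norm_num)
    | succ w ih =>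
      intro hw
      have ihw := ih (by omega)
      obtain ⟨e, he⟩ : ∃ e, a2 = (w + 1) * a1 + e :=
        ⟨a2 - (w + 1) * a1, (Nat.add_sub_cancel' (hexps (w + 1) (by omega)).1).symm⟩
      obtain ⟨g, hg⟩ : ∃ g, c1 = (w + 1) * c2 + g :=
        ⟨c1 - (w + 1) * c2, (Nat.add_sub_cancel' (hexps (w + 1) (by omega)).2).symm⟩
      have hK2 : D (w + 2) = -(y ^ b * D (w + 1)) - x ^ e * z ^ g * Cc (w + 1) :=
        (main12 (w + 1) (by omega) e g he hg).2
      rcases Nat.even_or_odd w with hwe | hwo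
      · -- w even, l = w+2 even
        have hwmod : w % 2 = 0 := Nat.even_iff.mp hwe
        constructor
        · intro hcon
          exact absurd hcon (by omega)
        intro _
        have hDodd : D (w + 1) ∈ P ^ ((w + 2) / 2) := ihw.1 (by omega)
        constructor
        · -- D (w+2) ∈ J * P^((w+2)/2)
          show D (w + 2) ∈ J * P ^ ((w + 1 + 1) / 2)
          rw [hK2]
          refine sub_mem (neg_mem ?_) ?_
          · exact Ideal.mul_mem_mul (hpowmem J y b hyJ hb) hDodd
          · refine HJdown _ (w + 1) _ ?_ (by omega)
            exact Ideal.mul_mem_left _ _ (CmemJP (w + 1) (by omega))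
        · -- y^b * D (w+2) ∈ P^((w+2)/2 + 1)
          show y ^ b * D (w + 2) ∈ P ^ ((w + 1 + 1) / 2 + 1)
          rcases Nat.eq_zero_or_pos w with rfl | hwpos
          · -- w = 0 : explicit identity
            have hid : y ^ b * D 2 = -(F * F) + x ^ e * z ^ g * (G * H) := by
              have hK2' : D 2 = -(y ^ b * D 1) - x ^ e * z ^ g * Cc 1 := hK2
              rw [hK2', hD1, hCc1, hF, hG, hH, he, hg]
              ring
            have h2 : (0 + 1 + 1) / 2 + 1 = 2 := rfl
            rw [h2]
            show y ^ b * D 2 ∈ P ^ 2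
            rw [hid]
            refine add_mem (neg_mem (Hmul _ _ 1 1 _ (by omega) hFP1 hFP1)) ?_
            exact Ideal.mul_mem_left _ _ (Hmul _ _ 1 1 _ (by omega) hGP1 hHP1)
          · -- w ≥ 2 (even, positive)
            obtain ⟨v, rfl⟩ : ∃ v, w = v + 2 := ⟨w - 2, by omega⟩
            have hK2'' : D (v + 4) = -(y ^ b * D (v + 3)) - x ^ e * z ^ g * Cc (v + 3) := hK2
            have hN : y ^ b * D (v + 4)
                = -(F * D (v + 3)) - x ^ a2 * z ^ c1 * D (v + 3)
                  - y ^ b * (x ^ e * z ^ g * Cc (v + 3)) := by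
              rw [hK2'', hF]
              ring
            obtain ⟨e2, he2⟩ : ∃ e2, a2 = (v + 2) * a1 + e2 :=
              ⟨a2 - (v + 2) * a1, (Nat.add_sub_cancel' (hexps (v + 2) (by omega)).1).symm⟩
            obtain ⟨g2, hg2⟩ : ∃ g2, c1 = (v + 2) * c2 + g2 :=
              ⟨c1 - (v + 2) * c2, (Nat.add_sub_cancel' (hexps (v + 2) (by omega)).2).symm⟩
            have hK3 : z ^ ((v + 2) * c2) * D (v + 3)
                = F * H ^ (v + 2) - x ^ e2 * G ^ 2 * Cc (v + 1) :=
              main3 (v + 1) (by omega) e2 g2 he2 hg2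
            have heq : x ^ a2 * z ^ c1 * D (v + 3)
                = x ^ a2 * z ^ g2 * (F * H ^ (v + 2))
                  - x ^ (a2 + e2) * z ^ g2 * (G ^ 2 * Cc (v + 1)) := by
              rw [hg2]
              linear_combination (x ^ a2 * z ^ g2) * hK3
            have hDv3 : D (v + 3) ∈ P ^ ((v + 4) / 2) := ihw.1 (by omega)
            show y ^ b * D (v + 4) ∈ P ^ ((v + 2 + 1 + 1) / 2 + 1)
            rw [hN, heq]
            refine sub_mem (sub_mem (neg_mem ?_) ?_) ?_
            · exact Hdown _ (1 + (v + 4) / 2) _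
                (Hmul _ _ 1 ((v + 4) / 2) _ rfl hFP1 hDv3) (by omega)
            · refine Hdown _ (v + 3) _ ?_ (by omega)
              refine sub_mem ?_ ?_
              · exact Ideal.mul_mem_left _ _ (Hmul _ _ 1 (v + 2) _ (by omega) hFP1
                  (Ideal.pow_mem_pow hHP _))
              · exact Ideal.mul_mem_left _ _ (Hmul _ _ 2 (v + 1) _ (by omega)
                  (Ideal.pow_mem_pow hGP _) (CmemP _))
            · refine Hdown _ (v + 3) _ ?_ (by omega)
              exact Ideal.mul_mem_left _ _ (Ideal.mul_mem_left _ _ (CmemP _))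
      · -- w odd, l = w+2 odd
        have hwmod : w % 2 = 1 := Nat.odd_iff.mp hwo
        constructor
        · intro _
          have hNw := (ihw.2 (by omega)).2
          have hidx : (w + 1 + 2) / 2 = (w + 1) / 2 + 1 := by omega
          rw [hidx, hK2]
          refine sub_mem (neg_mem hNw) ?_
          refine Hdown _ (w + 1) _ ?_ (by omega)
          exact Ideal.mul_mem_left _ _ (CmemP _)
        · intro hcon
          exact absurd hcon (by omega)
  -- now the final goal
  intro l hl
  rcases Nat.lt_or_ge l (q + 2) with hlq | hlq
  · -- l ≤ q+1 = r
    rcases Nat.eq_zero_or_pos l with rfl | hlpos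
    · -- l = 0
      rw [if_pos (Or.inl rfl), pow_one]
      have h0 : (0 + 1) / 2 = 0 := rfl
      rw [h0, pow_zero, mul_one, hD0]
      exact neg_mem (hpowmem J y b hyJ hb)
    obtain ⟨n, rfl⟩ : ∃ n, l = n + 1 := ⟨l - 1, by omega⟩
    have hmn := hmem n (by omega)
    rcases Nat.even_or_odd (n + 1) with hpe | hpo
    · have hmod : (n + 1) % 2 = 0 := Nat.even_iff.mp hpe
      rw [if_pos (Or.inl hmod), pow_one]
      have hidx : (n + 1 + 1) / 2 = (n + 1) / 2 := by omega
      rw [hidx]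
      exact (hmn.2 hmod).1
    · have hmod : (n + 1) % 2 = 1 := Nat.odd_iff.mp hpo
      rw [if_neg (by omega), pow_zero, one_mul]
      exact hmn.1 hmod
  · -- l = q + 2  (that is, l = r + 1)
    have hleq : l = q + 2 := by omega
    subst hleq
    rw [if_pos (Or.inr rfl), pow_one]
    -- exponent bookkeeping
    obtain ⟨er, her⟩ : ∃ er, a2 = q * a1 + er :=
      ⟨a2 - q * a1, (Nat.add_sub_cancel' hqa).symm⟩
    obtain ⟨gr, hgr⟩ : ∃ gr, c1 = q * c2 + gr :=
      ⟨c1 - q * c2, (Nat.add_sub_cancel' hqc).symm⟩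
    have herlt : er < a1 := by
      generalize q * a1 = B at her hlt
      omega
    have hqa1 : (q + 1) * a1 = q * a1 + a1 := by ring
    have hqc1 : (q + 1) * c2 = q * c2 + c2 := by ring
    set α := a1 - er with hαdef
    have hαpos : 1 ≤ α := by omega
    have haer : a1 = α + er := by omega
    set ε := c2 - ((q + 1) * c2 - c1) with hεdef
    have hε1 : ε ≤ c2 := Nat.sub_le _ _
    have hε2 : ε ≤ gr := by
      rcases le_or_gt ((q + 1) * c2) c1 with h | h
      · have h9 : c2 ≤ gr := by
          rw [hqc1] at h
          rw [hgr] at h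
          omega
        exact le_trans hε1 h9
      · have h10 : (q + 1) * c2 - c1 = c2 - gr := by
          rw [hqc1, hgr]
          generalize q * c2 = B
          omega
        rw [hεdef, h10]
        omega
    obtain ⟨d1, hd1⟩ : ∃ d1, c2 = ε + d1 := ⟨c2 - ε, (Nat.add_sub_cancel' hε1).symm⟩
    obtain ⟨d2, hd2⟩ : ∃ d2, gr = ε + d2 := ⟨gr - ε, (Nat.add_sub_cancel' hε2).symm⟩
    -- clean up hDrec at q+2
    have h7 := hDrec (q + 2) (by omega) (by omega)
    have e1 : q + 2 - 1 = q + 1 := rfl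
    rw [e1] at h7
    have e2 : (q + 1) * a1 - a2 = α := by
      rw [hqa1, her]
      generalize q * a1 = B
      omega
    have e3 : ((q + 1) * a1 - a2 + a2) - (q + 1) * a1 = 0 := by
      rw [hqa1, her]
      generalize q * a1 = B
      omega
    have e4 : c2 - ((q + 1) * c2 - c1) = ε := hεdef.symm
    rw [e3, e2, e4, pow_zero, one_mul] at h7
    -- the key identity K4
    obtain ⟨K1r, K2r⟩ := main12 q (le_refl q) er gr her hgr
    have K4 : x ^ (a1 + a2) * D (q + 1)
        = -(x ^ er * y ^ b * G ^ (q + 1)) - x ^ er * z ^ gr * (H * Cc q) := by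
      linear_combination (x ^ (a1 + a2)) * K2r + (-(y ^ b)) * K1r
        + (x ^ er * z ^ gr * Cc q) * hH
    have K4' : x ^ (a1 + a2) * D (q + 1)
        = -(x ^ er * y ^ b * G ^ (q + 1)) - x ^ er * z ^ (ε + d2) * (H * Cc q) := by
      rw [← hd2]
      exact K4
    have hH2 : H = x ^ (a1 + a2) - z ^ (ε + d1) * y ^ b := by
      rw [hH, hd1]
    have hG2 : G = z ^ (c1 + (ε + d1)) - y ^ b * x ^ (α + er) := by
      rw [hG, hd1, haer]
    -- the formula for D (q+2)
    have Phi : D (q + 2) = -(z ^ (d1 + c1) * G ^ (q + 1))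
        - x ^ α * z ^ d1 * (y ^ b * D (q + 1))
        - x ^ (α + er) * z ^ d2 * (H * Cc q) := by
      refine mul_left_cancel₀ (pow_ne_zero ε hzne) ?_
      rw [h7]
      linear_combination (x ^ α * D (q + 1)) * hH2 + (x ^ α) * K4'
        + (-(G ^ (q + 1))) * hG2
    -- memberships
    rw [Phi]
    refine sub_mem (sub_mem (neg_mem ?_) ?_) ?_
    · -- z^(d1+c1) * G^(q+1)
      refine HJdown _ (q + 1) _ ?_ (by omega)
      exact Ideal.mul_mem_mul (hpowmem J z (d1 + c1) hzJ (by omega)) (Ideal.pow_mem_pow hGP _)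
    · -- x^α * z^d1 * (y^b * D (q+1))
      refine Ideal.mul_mem_mul (Ideal.mul_mem_right _ _ (hpowmem J x α hxJ hαpos)) ?_
      rcases Nat.even_or_odd (q + 1) with hqe | hqo
      · have hmod : (q + 1) % 2 = 0 := Nat.even_iff.mp hqe
        have hNr := ((hmem q (le_refl q)).2 hmod).2
        have hidx : (q + 2 + 1) / 2 = (q + 1) / 2 + 1 := by omega
        rw [hidx]
        exact hNr
      · have hmod : (q + 1) % 2 = 1 := Nat.odd_iff.mp hqo
        have hDr := (hmem q (le_refl q)).1 hmod
        have hidx : (q + 2 + 1) / 2 = (q + 2) / 2 := by omega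
        rw [hidx]
        exact Ideal.mul_mem_left _ _ hDr
    · -- x^(α+er) * z^d2 * (H * Cc q)
      refine HJdown _ (q + 1) _ ?_ (by omega)
      refine Ideal.mul_mem_mul ?_ (Hmul _ _ 1 q _ (by omega) hHP1 (CmemP q))
      have hx2 : x ^ (α + er) ∈ J := by
        rw [pow_add]
        exact Ideal.mul_mem_right _ _ (hpowmem J x α hxJ hαpos)
      exact Ideal.mul_mem_right _ _ hx2
end

section
/- Let P ⊆ k[x,y,z] be the kernel of the k-algebra map to k[t] sending x ↦ t^{s+1}, y ↦ t^{s^2-s-1}, z ↦ t^s for an integer s ≥ 4. Then P is generated by the 2x2 minors of the matrix [[x, y, z^{s-1}],[z, x^{s-2}, y]], i.e. P = (y^2 - x^{s-2} z^{s-1}, z^s - xy, x^{s-1} - yz). -/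
open MvPolynomial

namespace Stmt18Aux

noncomputable def phi (k : Type*) [Field k] (m : ℕ) : MvPolynomial (Fin 3) k →ₐ[k] Polynomial k :=
  aeval ![Polynomial.X ^ (5 + m), Polynomial.X ^ (11 + 7 * m + m ^ 2), Polynomial.X ^ (4 + m)]

noncomputable def J (k : Type*) [Field k] (m : ℕ) : Ideal (MvPolynomial (Fin 3) k) :=
  Ideal.span {X 1 ^ 2 - X 0 ^ (2 + m) * X 2 ^ (3 + m),
              X 2 ^ (4 + m) - X 0 * X 1,
              X 0 ^ (3 + m) - X 1 * X 2}

def NF (m : ℕ) (d : Fin 3 →₀ ℕ) : Prop :=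
  (d 1 = 0 ∧ d 0 ≤ 3 + m) ∨ (d 0 = 0 ∧ d 1 = 1 ∧ d 2 = 0)

def e (m : ℕ) (d : Fin 3 →₀ ℕ) : ℕ :=
  (5 + m) * d 0 + (11 + 7 * m + m ^ 2) * d 1 + (4 + m) * d 2

variable {k : Type*} [Field k] (m : ℕ)

lemma phi_prod (a b c : ℕ) :
    phi k m (X 0 ^ a * X 1 ^ b * X 2 ^ c) =
      Polynomial.X ^ ((5 + m) * a + (11 + 7 * m + m ^ 2) * b + (4 + m) * c) := by
  simp only [phi, map_mul, map_pow, aeval_X, Matrix.cons_val_zero, Matrix.cons_val_one,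
    Matrix.head_cons, Matrix.cons_val_two, Matrix.tail_cons, ← pow_mul, ← pow_add]

lemma monomial_eq_prod (d : Fin 3 →₀ ℕ) (r : k) :
    (monomial d r : MvPolynomial (Fin 3) k) = C r * (X 0 ^ d 0 * X 1 ^ d 1 * X 2 ^ d 2) := by
  rw [monomial_eq, Finsupp.prod_fintype _ _ (fun i => pow_zero _), Fin.prod_univ_three]

lemma phi_monomial (d : Fin 3 →₀ ℕ) (r : k) :
    phi k m (monomial d r) = Polynomial.C r * Polynomial.X ^ e m d := by
  rw [monomial_eq_prod, map_mul, phi_prod]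
  congr 1
  simp [phi, algebraMap_eq]

lemma J_le_ker : ∀ g ∈ J k m, phi k m g = 0 := by
  intro g hg
  have h1 : phi k m (X 1 ^ 2 - X 0 ^ (2 + m) * X 2 ^ (3 + m)) = 0 := by
    have e1 : (X 1 ^ 2 : MvPolynomial (Fin 3) k) = X 0 ^ 0 * X 1 ^ 2 * X 2 ^ 0 := by ring
    have e2 : (X 0 ^ (2 + m) * X 2 ^ (3 + m) : MvPolynomial (Fin 3) k)
        = X 0 ^ (2 + m) * X 1 ^ 0 * X 2 ^ (3 + m) := by ring
    rw [map_sub, e1, e2, phi_prod, phi_prod, sub_eq_zero]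
    congr 1
    ring
  have h2 : phi k m (X 2 ^ (4 + m) - X 0 * X 1) = 0 := by
    have e1 : (X 2 ^ (4 + m) : MvPolynomial (Fin 3) k) = X 0 ^ 0 * X 1 ^ 0 * X 2 ^ (4 + m) := by
      ring
    have e2 : (X 0 * X 1 : MvPolynomial (Fin 3) k) = X 0 ^ 1 * X 1 ^ 1 * X 2 ^ 0 := by ring
    rw [map_sub, e1, e2, phi_prod, phi_prod, sub_eq_zero]
    congr 1
    ring
  have h3 : phi k m (X 0 ^ (3 + m) - X 1 * X 2) = 0 := by
    have e1 : (X 0 ^ (3 + m) : MvPolynomial (Fin 3) k) = X 0 ^ (3 + m) * X 1 ^ 0 * X 2 ^ 0 := by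
      ring
    have e2 : (X 1 * X 2 : MvPolynomial (Fin 3) k) = X 0 ^ 0 * X 1 ^ 1 * X 2 ^ 1 := by ring
    rw [map_sub, e1, e2, phi_prod, phi_prod, sub_eq_zero]
    congr 1
    ring
  have hle : J k m ≤ RingHom.ker (phi k m).toRingHom := by
    rw [J, Ideal.span_le]
    rintro g (rfl | rfl | rfl) <;> simp only [SetLike.mem_coe, RingHom.mem_ker,
      AlgHom.toRingHom_eq_coe, RingHom.coe_coe] <;> assumption
  exact hle hg

lemma g1_mem : (X 1 ^ 2 - X 0 ^ (2 + m) * X 2 ^ (3 + m) : MvPolynomial (Fin 3) k) ∈ J k m :=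
  Ideal.subset_span (by simp)

lemma g2_mem : (X 2 ^ (4 + m) - X 0 * X 1 : MvPolynomial (Fin 3) k) ∈ J k m :=
  Ideal.subset_span (by simp)

lemma g3_mem : (X 0 ^ (3 + m) - X 1 * X 2 : MvPolynomial (Fin 3) k) ∈ J k m :=
  Ideal.subset_span (by simp)

lemma g4_mem : (X 0 ^ (4 + m) - X 2 ^ (5 + m) : MvPolynomial (Fin 3) k) ∈ J k m := by
  have h : (X 0 ^ (4 + m) - X 2 ^ (5 + m) : MvPolynomial (Fin 3) k)
      = X 0 * (X 0 ^ (3 + m) - X 1 * X 2) - X 2 * (X 2 ^ (4 + m) - X 0 * X 1) := by ring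
  rw [h]
  exact sub_mem (Ideal.mul_mem_left _ _ (g3_mem m)) (Ideal.mul_mem_left _ _ (g2_mem m))

lemma reduce_aux : ∀ n a b c : ℕ, a + (4 + m) * b ≤ n →
    ∃ p : MvPolynomial (Fin 3) k, (X 0 ^ a * X 1 ^ b * X 2 ^ c - p ∈ J k m) ∧
      ((∃ a' c', a' ≤ 3 + m ∧ p = X 0 ^ a' * X 2 ^ c') ∨ p = X 1) := by
  intro n
  induction n using Nat.strong_induction_on with
  | _ n ih =>
    intro a b c hn
    rcases Nat.lt_or_ge b 2 with hb | hb
    · interval_cases b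
      · -- b = 0
        rcases Nat.lt_or_ge a (4 + m) with ha | ha
        · refine ⟨X 0 ^ a * X 2 ^ c, ?_, Or.inl ⟨a, c, by omega, rfl⟩⟩
          have hz : (X 0 ^ a * X 1 ^ 0 * X 2 ^ c - X 0 ^ a * X 2 ^ c :
              MvPolynomial (Fin 3) k) = 0 := by ring
          rw [hz]
          exact (J k m).zero_mem
        · obtain ⟨a', rfl⟩ : ∃ a', a = a' + (4 + m) := ⟨a - (4 + m), by omega⟩
          obtain ⟨p, hp, hN⟩ := ih a' (by omega) a' 0 (c + (5 + m)) (by omega)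
          refine ⟨p, ?_, hN⟩
          have key : (X 0 ^ (a' + (4 + m)) * X 1 ^ 0 * X 2 ^ c - p : MvPolynomial (Fin 3) k)
              = X 0 ^ a' * X 2 ^ c * (X 0 ^ (4 + m) - X 2 ^ (5 + m))
                + (X 0 ^ a' * X 1 ^ 0 * X 2 ^ (c + (5 + m)) - p) := by ring
          rw [key]
          exact add_mem (Ideal.mul_mem_left _ _ (g4_mem m)) hp
      · -- b = 1
        rcases Nat.eq_zero_or_pos a with rfl | ha
        · rcases Nat.eq_zero_or_pos c with rfl | hc
          · refine ⟨X 1, ?_, Or.inr rfl⟩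
            have hz : (X 0 ^ 0 * X 1 ^ 1 * X 2 ^ 0 - X 1 : MvPolynomial (Fin 3) k) = 0 := by
              ring
            rw [hz]
            exact (J k m).zero_mem
          · obtain ⟨c', rfl⟩ : ∃ c', c = c' + 1 := ⟨c - 1, by omega⟩
            obtain ⟨p, hp, hN⟩ := ih (3 + m) (by omega) (3 + m) 0 c' (by omega)
            refine ⟨p, ?_, hN⟩
            have key : (X 0 ^ 0 * X 1 ^ 1 * X 2 ^ (c' + 1) - p : MvPolynomial (Fin 3) k)
                = -(X 2 ^ c' * (X 0 ^ (3 + m) - X 1 * X 2))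
                  + (X 0 ^ (3 + m) * X 1 ^ 0 * X 2 ^ c' - p) := by ring
            rw [key]
            exact add_mem (neg_mem (Ideal.mul_mem_left _ _ (g3_mem m))) hp
        · obtain ⟨a', rfl⟩ : ∃ a', a = a' + 1 := ⟨a - 1, by omega⟩
          obtain ⟨p, hp, hN⟩ := ih a' (by omega) a' 0 (c + (4 + m)) (by omega)
          refine ⟨p, ?_, hN⟩
          have key : (X 0 ^ (a' + 1) * X 1 ^ 1 * X 2 ^ c - p : MvPolynomial (Fin 3) k)
              = -(X 0 ^ a' * X 2 ^ c * (X 2 ^ (4 + m) - X 0 * X 1))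
                + (X 0 ^ a' * X 1 ^ 0 * X 2 ^ (c + (4 + m)) - p) := by ring
          rw [key]
          exact add_mem (neg_mem (Ideal.mul_mem_left _ _ (g2_mem m))) hp
    · obtain ⟨b', rfl⟩ : ∃ b', b = b' + 2 := ⟨b - 2, by omega⟩
      have hx : (4 + m) * (b' + 2) = (4 + m) * b' + (8 + 2 * m) := by ring
      obtain ⟨p, hp, hN⟩ := ih (a + (2 + m) + (4 + m) * b') (by omega)
        (a + (2 + m)) b' (c + (3 + m)) (by omega)
      refine ⟨p, ?_, hN⟩
      have key : (X 0 ^ a * X 1 ^ (b' + 2) * X 2 ^ c - p : MvPolynomial (Fin 3) k)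
          = X 0 ^ a * X 1 ^ b' * X 2 ^ c * (X 1 ^ 2 - X 0 ^ (2 + m) * X 2 ^ (3 + m))
            + (X 0 ^ (a + (2 + m)) * X 1 ^ b' * X 2 ^ (c + (3 + m)) - p) := by ring
      rw [key]
      exact add_mem (Ideal.mul_mem_left _ _ (g1_mem m)) hp

lemma reduce (a b c : ℕ) :
    ∃ p : MvPolynomial (Fin 3) k, (X 0 ^ a * X 1 ^ b * X 2 ^ c - p ∈ J k m) ∧
      ((∃ a' c', a' ≤ 3 + m ∧ p = X 0 ^ a' * X 2 ^ c') ∨ p = X 1) :=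
  reduce_aux m _ a b c le_rfl

lemma e_case1 (a c : ℕ) (d : Fin 3 →₀ ℕ) (h1 : d 1 = 0) (h0 : d 0 = a) (h2 : d 2 = c) :
    e m d = a + (4 + m) * (a + c) := by
  simp only [e, h1, h0, h2]
  ring

lemma mixed_absurd (a c : ℕ) (ha : a ≤ 3 + m)
    (h : a + (4 + m) * (a + c) = 11 + 7 * m + m ^ 2) : False := by
  have hmod : (a + (4 + m) * (a + c)) % (4 + m) = a := by
    rw [Nat.add_mul_mod_self_left, Nat.mod_eq_of_lt (by omega)]
  have hmod2 : (11 + 7 * m + m ^ 2) % (4 + m) = 3 + m := by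
    have h' : 11 + 7 * m + m ^ 2 = (3 + m) + (4 + m) * (2 + m) := by ring
    rw [h', Nat.add_mul_mod_self_left, Nat.mod_eq_of_lt (by omega)]
  have ha3 : a = 3 + m := by rw [← hmod, h, hmod2]
  subst ha3
  have hle : (4 + m) * (3 + m) ≤ (4 + m) * ((3 + m) + c) :=
    Nat.mul_le_mul_left _ (by omega)
  have hexp : (4 + m) * (3 + m) = 12 + 7 * m + m ^ 2 := by ring
  omega

lemma e_inj {d d' : Fin 3 →₀ ℕ} (hd : NF m d) (hd' : NF m d') (h : e m d = e m d') :
    d = d' := by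
  rcases hd with ⟨h1, h0⟩ | ⟨p0, p1, p2⟩ <;> rcases hd' with ⟨h1', h0'⟩ | ⟨q0, q1, q2⟩
  · rw [e_case1 m (d 0) (d 2) d h1 rfl rfl, e_case1 m (d' 0) (d' 2) d' h1' rfl rfl] at h
    have hmod := congrArg (· % (4 + m)) h
    simp only [Nat.add_mul_mod_self_left] at hmod
    rw [Nat.mod_eq_of_lt (show d 0 < 4 + m by omega),
      Nat.mod_eq_of_lt (show d' 0 < 4 + m by omega)] at hmod
    have hsum : (4 + m) * (d 0 + d 2) = (4 + m) * (d' 0 + d' 2) := by omega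
    have hsum2 : d 0 + d 2 = d' 0 + d' 2 := Nat.eq_of_mul_eq_mul_left (by omega) hsum
    ext i
    fin_cases i <;> simp_all
  · exfalso
    rw [e_case1 m (d 0) (d 2) d h1 rfl rfl] at h
    have he' : e m d' = 11 + 7 * m + m ^ 2 := by simp [e, q0, q1, q2]
    exact mixed_absurd m (d 0) (d 2) h0 (by omega)
  · exfalso
    rw [e_case1 m (d' 0) (d' 2) d' h1' rfl rfl] at h
    have he' : e m d = 11 + 7 * m + m ^ 2 := by simp [e, p0, p1, p2]
    exact mixed_absurd m (d' 0) (d' 2) h0' (by omega)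
  · ext i
    fin_cases i <;> simp_all

lemma nf_injective (v : MvPolynomial (Fin 3) k)
    (hv : ∀ d ∈ v.support, ∀ d' ∈ v.support, e m d = e m d' → d = d')
    (h0 : phi k m v = 0) : v = 0 := by
  ext d
  rw [coeff_zero]
  by_cases hd : d ∈ v.support
  · have hphi : phi k m v
        = ∑ d' ∈ v.support, Polynomial.C (coeff d' v) * Polynomial.X ^ e m d' := by
      conv_lhs => rw [v.as_sum]
      rw [map_sum]
      exact Finset.sum_congr rfl fun d' _ => phi_monomial m d' _
    have hc : Polynomial.coeff (phi k m v) (e m d) = coeff d v := by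
      rw [hphi, Polynomial.finset_sum_coeff]
      rw [Finset.sum_eq_single_of_mem d hd]
      · simp
      · intro d' hd' hne
        have hnee : e m d' ≠ e m d := fun h => hne (hv d' hd' d hd h)
        rw [Polynomial.coeff_C_mul, Polynomial.coeff_X_pow, if_neg (Ne.symm hnee), mul_zero]
    rw [h0, Polynomial.coeff_zero] at hc
    exact hc.symm
  · exact notMem_support_iff.mp hd

noncomputable def V' (k : Type*) [Field k] (m : ℕ) : Submodule k (MvPolynomial (Fin 3) k) where
  carrier := {f | ∀ d ∈ f.support, NF m d}
  add_mem' := fun ha hb d hd => (Finset.mem_union.mp (support_add hd)).elim (ha d) (hb d)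
  zero_mem' := by simp
  smul_mem' := fun c f hf d hd => hf d (support_smul hd)

lemma X1_mem_V' : (X 1 : MvPolynomial (Fin 3) k) ∈ V' k m := by
  intro d hd
  rw [support_X] at hd
  rw [Finset.mem_singleton] at hd
  subst hd
  right
  refine ⟨?_, ?_, ?_⟩ <;> simp [Finsupp.single_apply]

lemma X0X2_mem_V' (a c : ℕ) (ha : a ≤ 3 + m) :
    (X 0 ^ a * X 2 ^ c : MvPolynomial (Fin 3) k) ∈ V' k m := by
  classical
  intro d hd
  rw [X_pow_eq_monomial, X_pow_eq_monomial, monomial_mul, one_mul] at hd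
  rw [support_monomial] at hd
  rw [if_neg one_ne_zero, Finset.mem_singleton] at hd
  subst hd
  left
  constructor
  · simp [Finsupp.single_apply]
  · simpa [Finsupp.single_apply] using ha

lemma total (f : MvPolynomial (Fin 3) k) : ∃ v ∈ V' k m, f - v ∈ J k m := by
  have hT : f ∈ V' k m ⊔ (J k m).restrictScalars k := by
    rw [f.as_sum]
    refine Submodule.sum_mem _ fun d hd => ?_
    rw [monomial_eq_prod, ← smul_eq_C_mul]
    refine Submodule.smul_mem (V' k m ⊔ (J k m).restrictScalars k) _ ?_
    obtain ⟨p, hp, hN⟩ := reduce (k := k) m (d 0) (d 1) (d 2)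
    have hsplit : (X 0 ^ d 0 * X 1 ^ d 1 * X 2 ^ d 2 : MvPolynomial (Fin 3) k)
        = p + (X 0 ^ d 0 * X 1 ^ d 1 * X 2 ^ d 2 - p) := by ring
    rw [hsplit]
    refine Submodule.add_mem _ (Submodule.mem_sup_left ?_) (Submodule.mem_sup_right hp)
    rcases hN with ⟨a', c', ha', rfl⟩ | rfl
    · exact X0X2_mem_V' m a' c' ha'
    · exact X1_mem_V' m
  obtain ⟨v, hv, w, hw, hvw⟩ := Submodule.mem_sup.mp hT
  refine ⟨v, hv, ?_⟩
  have : f - v = w := by rw [← hvw]; ring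
  rw [this]
  exact hw

lemma main (k : Type*) [Field k] (m : ℕ) : RingHom.ker (phi k m).toRingHom = J k m := by
  ext f
  constructor
  · intro hf
    obtain ⟨v, hv, hfv⟩ := total m f
    have h1 : phi k m (f - v) = 0 := J_le_ker m _ hfv
    have h2 : phi k m f = 0 := hf
    have h3 : phi k m v = 0 := by
      rw [map_sub, h2, zero_sub, neg_eq_zero] at h1
      exact h1
    have hv0 : v = 0 :=
      nf_injective m v (fun d hd d' hd' he => e_inj m (hv d hd) (hv d' hd') he) h3
    rw [hv0, sub_zero] at hfv
    exact hfv
  · intro hf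
    exact J_le_ker m f hf

end Stmt18Aux

theorem stmt_18 {k : Type*} [Field k] (s : ℕ) (hs : 4 ≤ s) :
    RingHom.ker (MvPolynomial.aeval
        (![Polynomial.X ^ (s + 1), Polynomial.X ^ (s ^ 2 - s - 1), Polynomial.X ^ s] :
          Fin 3 → Polynomial k) :
        MvPolynomial (Fin 3) k →ₐ[k] Polynomial k).toRingHom
      = Ideal.span
          {X 1 ^ 2 - X 0 ^ (s - 2) * X 2 ^ (s - 1),
           X 2 ^ s - X 0 * X 1,
           X 0 ^ (s - 1) - X 1 * X 2} := by
  obtain ⟨m, rfl⟩ : ∃ m, s = 4 + m := ⟨s - 4, by omega⟩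
  have E2 : (4 + m) ^ 2 - (4 + m) - 1 = 11 + 7 * m + m ^ 2 := by
    have h : (4 + m) ^ 2 = m * m + 8 * m + 16 := by ring
    have h2 : m ^ 2 = m * m := sq m
    rw [h, h2]
    generalize m * m = q
    omega
  rw [show 4 + m + 1 = 5 + m from by omega, E2, show 4 + m - 2 = 2 + m from by omega,
      show 4 + m - 1 = 3 + m from by omega]
  exact Stmt18Aux.main k m
end

section
/- For the ideal P = (F,G,H) ⊆ k[x,y,z] with F = y^2 - x^2 z^3, G = z^4 - xy, H = x^3 - yz (defining the curve k[t^5,t^{11},t^4]), the ideal B = (D_3) + (G^i H^j : i + j = 3) satisfies length_R(R/(B + (z))) = binom(4,2)·(2a1 + a2)·b = 6·4 = 24, where D_3 = y^4 - x^8 z + 4x^5 y z^2 - 6x^2 y^2 z^3 - x^4 z^6 + 4xyz^7 - z^{11}. -/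
set_option maxHeartbeats 1000000

open MvPolynomial

namespace Stmt19Aux

noncomputable section

variable {k : Type*} [Field k]

/-- exponent vector x^a y^b -/
def fe (a b : ℕ) : Fin 3 →₀ ℕ := Finsupp.single 0 a + Finsupp.single 1 b

lemma fe0 (a b : ℕ) : fe a b 0 = a := by simp [fe]
lemma fe1 (a b : ℕ) : fe a b 1 = b := by simp [fe]
lemma fe2 (a b : ℕ) : fe a b 2 = 0 := by simp [fe]

lemma fe_inj {a b a' b' : ℕ} (h : fe a b = fe a' b') : a = a' ∧ b = b' := by
  constructor
  · have := DFunLike.congr_fun h 0; simpa [fe0] using this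
  · have := DFunLike.congr_fun h 1; simpa [fe1] using this

lemma eq_fe (v : Fin 3 →₀ ℕ) (hv : v 2 = 0) : v = fe (v 0) (v 1) := by
  ext i
  fin_cases i <;> simp [fe, Finsupp.single_apply, hv]

lemma xy_pow (a b : ℕ) :
    (X 0 ^ a * X 1 ^ b : MvPolynomial (Fin 3) k) = monomial (fe a b) 1 := by
  rw [X_pow_eq_monomial, X_pow_eq_monomial, monomial_mul, one_mul]; rfl

lemma X2_eq : (X 2 : MvPolynomial (Fin 3) k) = monomial (Finsupp.single 2 1) 1 := by
  rw [← pow_one (X 2 : MvPolynomial (Fin 3) k), X_pow_eq_monomial]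

/-- staircase -/
def T : Finset (ℕ × ℕ) := (Finset.range 9 ×ˢ Finset.range 4).filter fun p => p.1 + 2 * p.2 ≤ 8

lemma mem_T {p : ℕ × ℕ} : p ∈ T ↔ p.2 ≤ 3 ∧ p.1 + 2 * p.2 ≤ 8 := by
  simp only [T, Finset.mem_filter, Finset.mem_product, Finset.mem_range]
  omega

def I : Ideal (MvPolynomial (Fin 3) k) :=
  Ideal.span {X 2, X 1 ^ 4, X 0 ^ 3 * X 1 ^ 3, X 0 ^ 5 * X 1 ^ 2, X 0 ^ 7 * X 1, X 0 ^ 9}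

def phi : MvPolynomial (Fin 3) k →ₗ[k] (↥T → k) where
  toFun f t := coeff (fe t.1.1 t.1.2) f
  map_add' f g := by funext t; simp [coeff_add]
  map_smul' c f := by funext t; simp [coeff_smul]

lemma phi_apply (f : MvPolynomial (Fin 3) k) (t : ↥T) :
    phi f t = coeff (fe t.1.1 t.1.2) f := rfl

lemma coeff_I_zero (f : MvPolynomial (Fin 3) k) (hf : f ∈ (I : Ideal (MvPolynomial (Fin 3) k)))
    (a b : ℕ) (hb : b ≤ 3) (hab : a + 2 * b ≤ 8) : coeff (fe a b) f = 0 := by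
  induction hf using Submodule.span_induction generalizing a b with
  | mem g hg =>
      simp only [Set.mem_insert_iff, Set.mem_singleton_iff] at hg
      rcases hg with rfl | rfl | rfl | rfl | rfl | rfl
      · rw [X2_eq, coeff_monomial, if_neg]
        intro h
        have := DFunLike.congr_fun h 2
        simp [fe2, Finsupp.single_apply] at this
      · rw [show (X 1 ^ 4 : MvPolynomial (Fin 3) k) = X 0 ^ 0 * X 1 ^ 4 by ring,
          xy_pow, coeff_monomial, if_neg]
        intro h; obtain ⟨h1, h2⟩ := fe_inj h; omega
      · rw [xy_pow, coeff_monomial, if_neg]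
        intro h; obtain ⟨h1, h2⟩ := fe_inj h; omega
      · rw [xy_pow, coeff_monomial, if_neg]
        intro h; obtain ⟨h1, h2⟩ := fe_inj h; omega
      · rw [show (X 0 ^ 7 * X 1 : MvPolynomial (Fin 3) k) = X 0 ^ 7 * X 1 ^ 1 by ring,
          xy_pow, coeff_monomial, if_neg]
        intro h; obtain ⟨h1, h2⟩ := fe_inj h; omega
      · rw [show (X 0 ^ 9 : MvPolynomial (Fin 3) k) = X 0 ^ 9 * X 1 ^ 0 by ring,
          xy_pow, coeff_monomial, if_neg]
        intro h; obtain ⟨h1, h2⟩ := fe_inj h; omega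
  | zero => simp
  | add f g hf hg ihf ihg => rw [coeff_add, ihf a b hb hab, ihg a b hb hab, add_zero]
  | smul r f hf ih =>
      rw [smul_eq_mul, coeff_mul]
      apply Finset.sum_eq_zero
      intro u hu
      rw [Finset.HasAntidiagonal.mem_antidiagonal] at hu
      have h2 : u.2 2 = 0 := by
        have := DFunLike.congr_fun hu 2
        simp only [Finsupp.add_apply, fe2] at this; omega
      have h0 : u.2 0 ≤ a := by
        have := DFunLike.congr_fun hu 0
        simp only [Finsupp.add_apply, fe0] at this; omega
      have h1 : u.2 1 ≤ b := by
        have := DFunLike.congr_fun hu 1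
        simp only [Finsupp.add_apply, fe1] at this; omega
      rw [eq_fe u.2 h2, ih (u.2 0) (u.2 1) (by omega) (by omega), mul_zero]

lemma mono_mem {a' b' a b : ℕ} (c : k) (ha : a' ≤ a) (hb : b' ≤ b)
    (hm : (X 0 ^ a' * X 1 ^ b' : MvPolynomial (Fin 3) k) ∈ (I : Ideal (MvPolynomial (Fin 3) k))) :
    (monomial (fe a b) c : MvPolynomial (Fin 3) k) ∈ (I : Ideal (MvPolynomial (Fin 3) k)) := by
  have hfe : fe (a - a') (b - b') + fe a' b' = fe a b := by
    ext i
    fin_cases i <;> simp [fe, Finsupp.single_apply] <;> omega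
  have h : (monomial (fe a b) c : MvPolynomial (Fin 3) k)
      = monomial (fe (a - a') (b - b')) c * (X 0 ^ a' * X 1 ^ b') := by
    rw [xy_pow, monomial_mul, mul_one, hfe]
  rw [h]
  exact Ideal.mul_mem_left _ _ hm

lemma mem_I_of (f : MvPolynomial (Fin 3) k)
    (hc : ∀ a b : ℕ, b ≤ 3 → a + 2 * b ≤ 8 → coeff (fe a b) f = 0) :
    f ∈ (I : Ideal (MvPolynomial (Fin 3) k)) := by
  nth_rewrite 1 [as_sum f]
  apply Ideal.sum_mem
  intro v hv
  by_cases h2 : v 2 = 0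
  · have hne : coeff v f ≠ 0 := mem_support_iff.mp hv
    have hnot : ¬ (v 1 ≤ 3 ∧ v 0 + 2 * v 1 ≤ 8) := by
      intro ⟨ha, hb⟩
      apply hne
      have h' := hc (v 0) (v 1) ha hb
      rwa [← eq_fe v h2] at h'
    rw [eq_fe v h2]
    rcases Nat.lt_or_ge (v 1) 4 with hb4 | hb4
    · have key : v 0 + 2 * v 1 ≥ 9 := by omega
      have hcase : v 1 = 0 ∨ v 1 = 1 ∨ v 1 = 2 ∨ v 1 = 3 := by omega
      rcases hcase with h1 | h1 | h1 | h1 <;> rw [h1]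
      · exact mono_mem _ (show 9 ≤ v 0 by omega) (le_refl 0)
          (by rw [pow_zero, mul_one]; exact Ideal.subset_span (by simp))
      · exact mono_mem _ (show 7 ≤ v 0 by omega) le_rfl
          (by rw [pow_one]; exact Ideal.subset_span (by simp))
      · exact mono_mem _ (show 5 ≤ v 0 by omega) le_rfl
          (Ideal.subset_span (by simp))
      · exact mono_mem _ (show 3 ≤ v 0 by omega) le_rfl
          (Ideal.subset_span (by simp))
    · exact mono_mem _ (Nat.zero_le _) (show 4 ≤ v 1 by omega)
        (by rw [pow_zero, one_mul]; exact Ideal.subset_span (by simp))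
  · have hfe : v - Finsupp.single 2 1 + Finsupp.single 2 1 = v := by
      ext i
      fin_cases i <;> simp [Finsupp.single_apply] <;> omega
    have h : (monomial v (coeff v f) : MvPolynomial (Fin 3) k)
        = monomial (v - Finsupp.single 2 1) (coeff v f) * X 2 := by
      rw [X2_eq, monomial_mul, mul_one, hfe]
    rw [h]
    exact Ideal.mul_mem_left _ _ (Ideal.subset_span (by simp))

lemma phi_surj : Function.Surjective (phi (k := k)) := by
  intro w
  refine ⟨∑ t : ↥T, monomial (fe t.1.1 t.1.2) (w t), ?_⟩
  funext t
  rw [phi_apply, coeff_sum]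
  rw [Finset.sum_eq_single t]
  · rw [coeff_monomial, if_pos rfl]
  · intro t' _ hne
    rw [coeff_monomial, if_neg]
    intro h
    obtain ⟨h1, h2⟩ := fe_inj h
    exact hne (Subtype.ext (Prod.ext h1 h2))
  · intro h; exact absurd (Finset.mem_univ t) h

lemma finrank_quot_I :
    Module.finrank k (MvPolynomial (Fin 3) k ⧸ (I : Ideal (MvPolynomial (Fin 3) k))) = 24 := by
  have e2 : Submodule.restrictScalars k (I : Ideal (MvPolynomial (Fin 3) k))
      = LinearMap.ker (phi (k := k)) := by
    ext f
    rw [Submodule.restrictScalars_mem, LinearMap.mem_ker]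
    constructor
    · intro hf
      funext t
      have ht := mem_T.mp t.2
      exact coeff_I_zero f hf _ _ ht.1 ht.2
    · intro hf
      apply mem_I_of
      intro a b hb hab
      have : ((a, b) : ℕ × ℕ) ∈ T := mem_T.mpr ⟨hb, hab⟩
      exact congrFun hf ⟨(a, b), this⟩
  have e : (MvPolynomial (Fin 3) k ⧸ (I : Ideal (MvPolynomial (Fin 3) k))) ≃ₗ[k] (↥T → k) :=
    (Submodule.Quotient.restrictScalarsEquiv k
      (I : Ideal (MvPolynomial (Fin 3) k))).symm.trans
      ((Submodule.quotEquivOfEq _ _ e2).trans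
        (LinearMap.quotKerEquivOfSurjective _ phi_surj))
  rw [e.finrank_eq, Module.finrank_pi, Fintype.card_coe]
  rfl

end

end Stmt19Aux

open Stmt19Aux in
theorem stmt_19 {k : Type*} [Field k]
    (x y z F G H D3 : MvPolynomial (Fin 3) k)
    (hx : x = X 0) (hy : y = X 1) (hz : z = X 2)
    (hF : F = y ^ 2 - x ^ 2 * z ^ 3)
    (hG : G = z ^ 4 - x * y)
    (hH : H = x ^ 3 - y * z)
    (hD3 : D3 = y ^ 4 - x ^ 8 * z + 4 * x ^ 5 * y * z ^ 2 - 6 * x ^ 2 * y ^ 2 * z ^ 3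
      - x ^ 4 * z ^ 6 + 4 * x * y * z ^ 7 - z ^ 11)
    (B : Ideal (MvPolynomial (Fin 3) k))
    (hB : B = Ideal.span ({D3} ∪ {p | ∃ i j : ℕ, i + j = 3 ∧ p = G ^ i * H ^ j})) :
    Module.finrank k (MvPolynomial (Fin 3) k ⧸ (B ⊔ Ideal.span {z})) = 24 := by
  subst hx hy hz hF hG hH hD3 hB
  set X0 : MvPolynomial (Fin 3) k := X 0
  set X1 : MvPolynomial (Fin 3) k := X 1
  set X2 : MvPolynomial (Fin 3) k := X 2
  have hD3mem : (X1 ^ 4 - X0 ^ 8 * X2 + 4 * X0 ^ 5 * X1 * X2 ^ 2 - 6 * X0 ^ 2 * X1 ^ 2 * X2 ^ 3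
      - X0 ^ 4 * X2 ^ 6 + 4 * X0 * X1 * X2 ^ 7 - X2 ^ 11) ∈
      Ideal.span ({X1 ^ 4 - X0 ^ 8 * X2 + 4 * X0 ^ 5 * X1 * X2 ^ 2 - 6 * X0 ^ 2 * X1 ^ 2 * X2 ^ 3
      - X0 ^ 4 * X2 ^ 6 + 4 * X0 * X1 * X2 ^ 7 - X2 ^ 11} ∪
      {p | ∃ i j : ℕ, i + j = 3 ∧ p = (X2 ^ 4 - X0 * X1) ^ i * (X0 ^ 3 - X1 * X2) ^ j}) :=
    Ideal.subset_span (Or.inl rfl)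
  have hGH : ∀ i j : ℕ, i + j = 3 →
      (X2 ^ 4 - X0 * X1) ^ i * (X0 ^ 3 - X1 * X2) ^ j ∈
      Ideal.span ({X1 ^ 4 - X0 ^ 8 * X2 + 4 * X0 ^ 5 * X1 * X2 ^ 2 - 6 * X0 ^ 2 * X1 ^ 2 * X2 ^ 3
      - X0 ^ 4 * X2 ^ 6 + 4 * X0 * X1 * X2 ^ 7 - X2 ^ 11} ∪
      {p | ∃ i j : ℕ, i + j = 3 ∧ p = (X2 ^ 4 - X0 * X1) ^ i * (X0 ^ 3 - X1 * X2) ^ j}) :=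
    fun i j hij => Ideal.subset_span (Or.inr ⟨i, j, hij, rfl⟩)
  have hz2 : X2 ∈ Ideal.span ({X2} : Set (MvPolynomial (Fin 3) k)) := Ideal.subset_span rfl
  have hEq : (Ideal.span ({X1 ^ 4 - X0 ^ 8 * X2 + 4 * X0 ^ 5 * X1 * X2 ^ 2 - 6 * X0 ^ 2 * X1 ^ 2 * X2 ^ 3 - X0 ^ 4 * X2 ^ 6 + 4 * X0 * X1 * X2 ^ 7 - X2 ^ 11} ∪ {p | ∃ i j : ℕ, i + j = 3 ∧ p = (X2 ^ 4 - X0 * X1) ^ i * (X0 ^ 3 - X1 * X2) ^ j})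
      ⊔ Ideal.span {X2}) = (I : Ideal (MvPolynomial (Fin 3) k)) := by
    apply le_antisymm
    · apply sup_le
      · rw [Ideal.span_le]
        intro p hp
        simp only [Set.mem_union, Set.mem_singleton_iff, Set.mem_setOf_eq] at hp
        rcases hp with rfl | ⟨i, j, hij, rfl⟩
        · have hsum := add_mem
            (Ideal.subset_span (show (X1 ^ 4 : MvPolynomial (Fin 3) k) ∈ _ by simp [X0, X1, X2]) :
              (X1 ^ 4 : MvPolynomial (Fin 3) k) ∈ (I : Ideal (MvPolynomial (Fin 3) k)))
            (Ideal.mul_mem_right (- X2 ^ 10 + 4 * X0 * X1 * X2 ^ 6 - 6 * X0 ^ 2 * X1 ^ 2 * X2 ^ 2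
              - X0 ^ 4 * X2 ^ 5 + 4 * X0 ^ 5 * X1 * X2 - X0 ^ 8) _
              (Ideal.subset_span (show (X2 : MvPolynomial (Fin 3) k) ∈ _ by simp [X0, X1, X2])))
          have hg : (X1 ^ 4 : MvPolynomial (Fin 3) k) + X2 * (- X2 ^ 10 + 4 * X0 * X1 * X2 ^ 6
              - 6 * X0 ^ 2 * X1 ^ 2 * X2 ^ 2 - X0 ^ 4 * X2 ^ 5 + 4 * X0 ^ 5 * X1 * X2 - X0 ^ 8)
              = X1 ^ 4 - X0 ^ 8 * X2 + 4 * X0 ^ 5 * X1 * X2 ^ 2 - 6 * X0 ^ 2 * X1 ^ 2 * X2 ^ 3 - X0 ^ 4 * X2 ^ 6 + 4 * X0 * X1 * X2 ^ 7 - X2 ^ 11 := by ring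
          rwa [hg] at hsum
        · rcases (show i = 0 ∧ j = 3 ∨ i = 1 ∧ j = 2 ∨ i = 2 ∧ j = 1 ∨ i = 3 ∧ j = 0 by
            omega) with ⟨rfl, rfl⟩ | ⟨rfl, rfl⟩ | ⟨rfl, rfl⟩ | ⟨rfl, rfl⟩
          · have hsum := add_mem
              (Ideal.subset_span (show (X0 ^ 9 : MvPolynomial (Fin 3) k) ∈ _ by simp [X0, X1, X2]) :
                (X0 ^ 9 : MvPolynomial (Fin 3) k) ∈ (I : Ideal (MvPolynomial (Fin 3) k)))
              (Ideal.mul_mem_right (- X1 ^ 3 * X2 ^ 2 + 3 * X0 ^ 3 * X1 ^ 2 * X2 - 3 * X0 ^ 6 * X1) _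
                (Ideal.subset_span (show (X2 : MvPolynomial (Fin 3) k) ∈ _ by simp [X0, X1, X2])))
            have hg : (X0 ^ 9 : MvPolynomial (Fin 3) k) + X2 * (- X1 ^ 3 * X2 ^ 2
                + 3 * X0 ^ 3 * X1 ^ 2 * X2 - 3 * X0 ^ 6 * X1)
                = (X2 ^ 4 - X0 * X1) ^ 0 * (X0 ^ 3 - X1 * X2) ^ 3 := by ring
            rwa [hg] at hsum
          · have hsum := add_mem
              (neg_mem (Ideal.subset_span
                (show (X0 ^ 7 * X1 : MvPolynomial (Fin 3) k) ∈ _ by simp [X0, X1, X2]) :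
                (X0 ^ 7 * X1 : MvPolynomial (Fin 3) k) ∈ (I : Ideal (MvPolynomial (Fin 3) k))))
              (Ideal.mul_mem_right (X1 ^ 2 * X2 ^ 5 - X0 * X1 ^ 3 * X2 - 2 * X0 ^ 3 * X1 * X2 ^ 4
                + 2 * X0 ^ 4 * X1 ^ 2 + X0 ^ 6 * X2 ^ 3) _
                (Ideal.subset_span (show (X2 : MvPolynomial (Fin 3) k) ∈ _ by simp [X0, X1, X2])))
            have hg : - (X0 ^ 7 * X1 : MvPolynomial (Fin 3) k) + X2 * (X1 ^ 2 * X2 ^ 5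
                - X0 * X1 ^ 3 * X2 - 2 * X0 ^ 3 * X1 * X2 ^ 4 + 2 * X0 ^ 4 * X1 ^ 2
                + X0 ^ 6 * X2 ^ 3)
                = (X2 ^ 4 - X0 * X1) ^ 1 * (X0 ^ 3 - X1 * X2) ^ 2 := by ring
            rwa [hg] at hsum
          · have hsum := add_mem
              (Ideal.subset_span
                (show (X0 ^ 5 * X1 ^ 2 : MvPolynomial (Fin 3) k) ∈ _ by simp [X0, X1, X2]) :
                (X0 ^ 5 * X1 ^ 2 : MvPolynomial (Fin 3) k) ∈ (I : Ideal (MvPolynomial (Fin 3) k)))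
              (Ideal.mul_mem_right (- X1 * X2 ^ 8 + 2 * X0 * X1 ^ 2 * X2 ^ 4 - X0 ^ 2 * X1 ^ 3
                + X0 ^ 3 * X2 ^ 7 - 2 * X0 ^ 4 * X1 * X2 ^ 3) _
                (Ideal.subset_span (show (X2 : MvPolynomial (Fin 3) k) ∈ _ by simp [X0, X1, X2])))
            have hg : (X0 ^ 5 * X1 ^ 2 : MvPolynomial (Fin 3) k) + X2 * (- X1 * X2 ^ 8
                + 2 * X0 * X1 ^ 2 * X2 ^ 4 - X0 ^ 2 * X1 ^ 3 + X0 ^ 3 * X2 ^ 7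
                - 2 * X0 ^ 4 * X1 * X2 ^ 3)
                = (X2 ^ 4 - X0 * X1) ^ 2 * (X0 ^ 3 - X1 * X2) ^ 1 := by ring
            rwa [hg] at hsum
          · have hsum := add_mem
              (neg_mem (Ideal.subset_span
                (show (X0 ^ 3 * X1 ^ 3 : MvPolynomial (Fin 3) k) ∈ _ by simp [X0, X1, X2]) :
                (X0 ^ 3 * X1 ^ 3 : MvPolynomial (Fin 3) k) ∈ (I : Ideal (MvPolynomial (Fin 3) k))))
              (Ideal.mul_mem_right (X2 ^ 11 - 3 * X0 * X1 * X2 ^ 7 + 3 * X0 ^ 2 * X1 ^ 2 * X2 ^ 3) _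
                (Ideal.subset_span (show (X2 : MvPolynomial (Fin 3) k) ∈ _ by simp [X0, X1, X2])))
            have hg : - (X0 ^ 3 * X1 ^ 3 : MvPolynomial (Fin 3) k) + X2 * (X2 ^ 11
                - 3 * X0 * X1 * X2 ^ 7 + 3 * X0 ^ 2 * X1 ^ 2 * X2 ^ 3)
                = (X2 ^ 4 - X0 * X1) ^ 3 * (X0 ^ 3 - X1 * X2) ^ 0 := by ring
            rwa [hg] at hsum
      · rw [Ideal.span_le]
        intro p hp
        rw [Set.mem_singleton_iff] at hp
        subst hp
        exact Ideal.subset_span (by simp [X0, X1, X2])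
    · rw [I, Ideal.span_le]
      intro p hp
      simp only [Set.mem_insert_iff, Set.mem_singleton_iff] at hp
      have hD3' := Ideal.mem_sup_left (T := Ideal.span ({X2} : Set (MvPolynomial (Fin 3) k)))
        hD3mem
      have hz' : ∀ q : MvPolynomial (Fin 3) k, X2 * q ∈
          (Ideal.span ({X1 ^ 4 - X0 ^ 8 * X2 + 4 * X0 ^ 5 * X1 * X2 ^ 2 - 6 * X0 ^ 2 * X1 ^ 2 * X2 ^ 3 - X0 ^ 4 * X2 ^ 6 + 4 * X0 * X1 * X2 ^ 7 - X2 ^ 11} ∪ {p | ∃ i j : ℕ, i + j = 3 ∧ p = (X2 ^ 4 - X0 * X1) ^ i * (X0 ^ 3 - X1 * X2) ^ j}) ⊔ Ideal.span {X2}) :=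
        fun q => Ideal.mem_sup_right (Ideal.mul_mem_right q _ hz2)
      rcases hp with rfl | rfl | rfl | rfl | rfl | rfl
      · exact Ideal.mem_sup_right hz2
      · have hsum := add_mem hD3' (hz' (X2 ^ 10 - 4 * X0 * X1 * X2 ^ 6
          + 6 * X0 ^ 2 * X1 ^ 2 * X2 ^ 2 + X0 ^ 4 * X2 ^ 5 - 4 * X0 ^ 5 * X1 * X2 + X0 ^ 8))
        have hg : (X1 ^ 4 - X0 ^ 8 * X2 + 4 * X0 ^ 5 * X1 * X2 ^ 2 - 6 * X0 ^ 2 * X1 ^ 2 * X2 ^ 3 - X0 ^ 4 * X2 ^ 6 + 4 * X0 * X1 * X2 ^ 7 - X2 ^ 11)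
            + X2 * (X2 ^ 10 - 4 * X0 * X1 * X2 ^ 6 + 6 * X0 ^ 2 * X1 ^ 2 * X2 ^ 2
              + X0 ^ 4 * X2 ^ 5 - 4 * X0 ^ 5 * X1 * X2 + X0 ^ 8)
            = (X1 ^ 4 : MvPolynomial (Fin 3) k) := by ring
        rwa [hg] at hsum
      · have hsum := add_mem (neg_mem (Ideal.mem_sup_left (hGH 3 0 rfl)))
          (hz' (X2 ^ 11 - 3 * X0 * X1 * X2 ^ 7 + 3 * X0 ^ 2 * X1 ^ 2 * X2 ^ 3))
        have hg : - ((X2 ^ 4 - X0 * X1) ^ 3 * (X0 ^ 3 - X1 * X2) ^ 0)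
            + X2 * (X2 ^ 11 - 3 * X0 * X1 * X2 ^ 7 + 3 * X0 ^ 2 * X1 ^ 2 * X2 ^ 3)
            = (X0 ^ 3 * X1 ^ 3 : MvPolynomial (Fin 3) k) := by ring
        rwa [hg] at hsum
      · have hsum := add_mem (Ideal.mem_sup_left (hGH 2 1 rfl))
          (hz' (X1 * X2 ^ 8 - 2 * X0 * X1 ^ 2 * X2 ^ 4 + X0 ^ 2 * X1 ^ 3 - X0 ^ 3 * X2 ^ 7
            + 2 * X0 ^ 4 * X1 * X2 ^ 3))
        have hg : (X2 ^ 4 - X0 * X1) ^ 2 * (X0 ^ 3 - X1 * X2) ^ 1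
            + X2 * (X1 * X2 ^ 8 - 2 * X0 * X1 ^ 2 * X2 ^ 4 + X0 ^ 2 * X1 ^ 3 - X0 ^ 3 * X2 ^ 7
              + 2 * X0 ^ 4 * X1 * X2 ^ 3)
            = (X0 ^ 5 * X1 ^ 2 : MvPolynomial (Fin 3) k) := by ring
        rwa [hg] at hsum
      · have hsum := add_mem (neg_mem (Ideal.mem_sup_left (hGH 1 2 rfl)))
          (hz' (X1 ^ 2 * X2 ^ 5 - X0 * X1 ^ 3 * X2 - 2 * X0 ^ 3 * X1 * X2 ^ 4
            + 2 * X0 ^ 4 * X1 ^ 2 + X0 ^ 6 * X2 ^ 3))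
        have hg : - ((X2 ^ 4 - X0 * X1) ^ 1 * (X0 ^ 3 - X1 * X2) ^ 2)
            + X2 * (X1 ^ 2 * X2 ^ 5 - X0 * X1 ^ 3 * X2 - 2 * X0 ^ 3 * X1 * X2 ^ 4
              + 2 * X0 ^ 4 * X1 ^ 2 + X0 ^ 6 * X2 ^ 3)
            = (X0 ^ 7 * X1 : MvPolynomial (Fin 3) k) := by ring
        rwa [hg] at hsum
      · have hsum := add_mem (Ideal.mem_sup_left (hGH 0 3 rfl))
          (hz' (X1 ^ 3 * X2 ^ 2 - 3 * X0 ^ 3 * X1 ^ 2 * X2 + 3 * X0 ^ 6 * X1))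
        have hg : (X2 ^ 4 - X0 * X1) ^ 0 * (X0 ^ 3 - X1 * X2) ^ 3
            + X2 * (X1 ^ 3 * X2 ^ 2 - 3 * X0 ^ 3 * X1 ^ 2 * X2 + 3 * X0 ^ 6 * X1)
            = (X0 ^ 9 : MvPolynomial (Fin 3) k) := by ring
        rwa [hg] at hsum
  rw [hEq]
  exact finrank_quot_I
end
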